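/- arXiv:2506.12684 — 7 statements merged into one kernel-verified Lean document; each statement's English description precedes it below -/
import Mathlib

section
/- Let G be a noncomplete (P2 ∪ P1)-free graph. Then the minimum size of a cutset of G equals the minimum degree δ(G); that is, every cutset of G has size at least δ(G), and G has a cutset of size exactly δ(G). -/
open SimpleGraph

variable {V : Type*}

/-- The number of connected components of `G - S`. -/
noncomputable def SimpleGraph.compCount (G : SimpleGraph V) (S : Set V) : ℕ :=
  Nat.card (G.induce Sᶜ).ConnectedComponent

/-- `S` is a cutset of `G`: `G - S` has at least two connected components. -/
def SimpleGraph.IsCutset (G : SimpleGraph V) (S : Set V) : Prop :=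
  2 ≤ G.compCount S

/-- `G` is `t`-tough. -/
def SimpleGraph.Tough (t : ℝ) (G : SimpleGraph V) : Prop :=
  ∀ S : Set V, G.IsCutset S → t * G.compCount S ≤ S.ncard

/-- `G` contains no induced subgraph isomorphic to `H`. -/
def SimpleGraph.IndFree {W : Type*} (G : SimpleGraph V) (H : SimpleGraph W) : Prop :=
  ¬ ∃ f : W ↪ V, ∀ a b : W, G.Adj (f a) (f b) ↔ H.Adj a b

/-- The 5-vertex graph `2P2 ∪ P1`: two disjoint edges and an isolated vertex. -/
def twoP2P1 : SimpleGraph (Fin 5) :=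
  SimpleGraph.fromRel (fun i j => (i = 0 ∧ j = 1) ∨ (i = 2 ∧ j = 3))

/-- The 3-vertex graph `P2 ∪ P1`: an edge and an isolated vertex. -/
def P2P1 : SimpleGraph (Fin 3) :=
  SimpleGraph.fromRel (fun i j => i = 0 ∧ j = 1)

/-- The path on four vertices `P4`. -/
def P4 : SimpleGraph (Fin 4) :=
  SimpleGraph.fromRel (fun i j => (i = 0 ∧ j = 1) ∨ (i = 1 ∧ j = 2) ∨ (i = 2 ∧ j = 3))

/-- Degree of a vertex, as the cardinality of its neighbor set. -/
noncomputable def SimpleGraph.deg (G : SimpleGraph V) (v : V) : ℕ :=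
  (G.neighborSet v).ncard

/-- Minimum degree. -/
noncomputable def SimpleGraph.minDeg (G : SimpleGraph V) : ℕ :=
  sInf (Set.range G.deg)

/-- An independent set of vertices. -/
def SimpleGraph.IsIndepSet' (G : SimpleGraph V) (s : Set V) : Prop :=
  s.Pairwise (fun u v => ¬ G.Adj u v)

/-- The independence number. -/
noncomputable def SimpleGraph.indepNum' (G : SimpleGraph V) : ℕ :=
  sSup {n : ℕ | ∃ s : Set V, G.IsIndepSet' s ∧ s.ncard = n}

/-- `G` is a complete graph. -/
def SimpleGraph.IsCompleteGraph (G : SimpleGraph V) : Prop :=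
  ∀ u v : V, u ≠ v → G.Adj u v

open scoped Classical in
/-- Vertex connectivity: minimum size of a cutset for a noncomplete graph,
and `|V| - 1` for a complete graph. -/
noncomputable def SimpleGraph.kappa (G : SimpleGraph V) : ℕ :=
  if G.IsCompleteGraph then Nat.card V - 1
  else sInf {n : ℕ | ∃ S : Set V, G.IsCutset S ∧ S.ncard = n}

open scoped Classical in
/-- The scattering number: `max {c(G-S) - |S| : S a cutset}` for a noncomplete graph,
and `⊤` for a complete graph. -/
noncomputable def SimpleGraph.scatter (G : SimpleGraph V) : WithTop ℤ :=
  if G.IsCompleteGraph then ⊤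
  else ((sSup {z : ℤ | ∃ S : Set V, G.IsCutset S ∧
      z = (G.compCount S : ℤ) - (S.ncard : ℤ)} : ℤ) : WithTop ℤ)

/-- A `W`-matched path-cover of the vertex set `A`: a union of vertex-disjoint paths of `G`
covering `A`, each of whose two endvertices belong to `W`. -/
structure SimpleGraph.PathCover (G : SimpleGraph V) (A : Set V) (W : Set V) where
  num : ℕ
  left : Fin num → V
  right : Fin num → V
  walk : ∀ i, G.Walk (left i) (right i)
  isPath : ∀ i, (walk i).IsPath
  disj : ∀ i j, i ≠ j → ∀ v, v ∈ (walk i).support → v ∉ (walk j).support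
  cover : A ⊆ {v | ∃ i, v ∈ (walk i).support}
  matched : ∀ i, left i ∈ W ∧ right i ∈ W

/- In a `(P2 ∪ P1)`-free graph non-adjacency is transitive, so `G` is complete multipartite.
If `x` and `y` lie in different components of `G - S`, every neighbour of `x` is adjacent to `y`
and hence lies in `S`; thus `δ(G) ≤ |S|`. Conversely, for a vertex `x` of minimum degree, `x` is
isolated in `G - N(x)`, and `x` has a non-neighbour other than itself because `G` is not complete
and the degree of `x` is minimal, so `N(x)` is a cutset of size `δ(G)`. -/

namespace SimpleGraph

variable {G : SimpleGraph V}

theorem not_adj_trans_of_indFree_P2P1 (hfree : G.IndFree P2P1) {a b c : V}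
    (hab : ¬G.Adj a b) (hbc : ¬G.Adj b c) : ¬G.Adj a c := by
  intro hac
  have hb_ne_a : b ≠ a := fun h => hbc (h ▸ hac)
  have hb_ne_c : b ≠ c := fun h => hab (h ▸ hac)
  have hinj : Function.Injective ![a, c, b] := by
    intro i j hij
    fin_cases i <;> fin_cases j <;> simp_all [eq_comm]
  have hba_adj : ¬G.Adj b a := fun h => hab h.symm
  have hcb_adj : ¬G.Adj c b := fun h => hbc h.symm
  refine hfree ⟨⟨![a, c, b], hinj⟩, fun i j => ?_⟩
  fin_cases i <;> fin_cases j <;> simp [P2P1, hab, hbc, hac, hac.symm, hba_adj, hcb_adj]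

theorem minDeg_le_deg (v : V) : G.minDeg ≤ G.deg v :=
  Nat.sInf_le ⟨v, rfl⟩

theorem exists_deg_eq_minDeg [Nonempty V] : ∃ v, G.deg v = G.minDeg :=
  Nat.sInf_mem (Set.range_nonempty G.deg)

theorem deg_add_two_le_card_iff_not_isUniversal [Finite V] (x : V) :
    G.deg x + 2 ≤ Nat.card V ↔ ¬G.IsUniversal x := by
  have hcard : (insert x (G.neighborSet x)).ncard = G.deg x + 1 :=
    Set.ncard_insert_of_notMem G.notMem_neighborSet_self
  rw [← insert_neighborSet_eq_univ]
  constructor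
  · intro h huniv
    rw [huniv, Set.ncard_univ] at hcard
    omega
  · intro h
    have := Set.ncard_lt_card h
    omega

variable {S : Set V}

theorem IsCutset.exists_not_reachable (hS : G.IsCutset S) :
    ∃ x y : ↥Sᶜ, ¬(G.induce Sᶜ).Reachable x y := by
  have hcard : 1 < Nat.card (G.induce Sᶜ).ConnectedComponent := hS
  have : Finite (G.induce Sᶜ).ConnectedComponent := Nat.finite_of_card_ne_zero (by omega)
  obtain ⟨c, d, hcd⟩ := Finite.one_lt_card_iff_nontrivial.1 hcard
  obtain ⟨x, rfl⟩ := c.exists_rep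
  obtain ⟨y, rfl⟩ := d.exists_rep
  exact ⟨x, y, fun h => hcd (ConnectedComponent.sound h)⟩

theorem isCutset_of_not_reachable [Finite V] {x y : ↥Sᶜ} (h : ¬(G.induce Sᶜ).Reachable x y) :
    G.IsCutset S := by
  have : Nontrivial (G.induce Sᶜ).ConnectedComponent :=
    ⟨⟨_, _, fun hxy => h (ConnectedComponent.exact hxy)⟩⟩
  exact Finite.one_lt_card

theorem isCutset_neighborSet_of_not_isUniversal [Finite V] {x : V} (hx : ¬G.IsUniversal x) :
    G.IsCutset (G.neighborSet x) := by
  obtain ⟨w, hxw, hadj⟩ : ∃ w, x ≠ w ∧ ¬G.Adj x w := by simpa [IsUniversal] using hx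
  refine isCutset_of_not_reachable (x := ⟨x, G.notMem_neighborSet_self⟩) (y := ⟨w, hadj⟩) ?_
  rintro ⟨_ | @⟨_, z, _, hxz, _⟩⟩
  · exact hxw rfl
  · exact z.2 hxz

theorem neighborSet_subset_of_not_reachable
    (htrans : ∀ {a b c : V}, ¬G.Adj a b → ¬G.Adj b c → ¬G.Adj a c)
    {x y : ↥Sᶜ} (hxy : ¬(G.induce Sᶜ).Reachable x y) : G.neighborSet x ⊆ S := by
  intro z hxz
  by_contra hzS
  have hyx : ¬G.Adj y x := fun h => hxy (Adj.reachable (G := G.induce Sᶜ) h.symm)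
  have hzy : G.Adj z y := by
    by_contra hzy
    exact htrans hzy hyx hxz.symm
  exact hxy ((Adj.reachable (G := G.induce Sᶜ) (v := ⟨z, hzS⟩) hxz).trans
    (Adj.reachable (G := G.induce Sᶜ) (u := ⟨z, hzS⟩) hzy))

theorem IsCutset.minDeg_le_ncard [Finite V]
    (htrans : ∀ {a b c : V}, ¬G.Adj a b → ¬G.Adj b c → ¬G.Adj a c) (hS : G.IsCutset S) :
    G.minDeg ≤ S.ncard := by
  obtain ⟨x, y, hxy⟩ := hS.exists_not_reachable
  exact (minDeg_le_deg (x : V)).trans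
    (Set.ncard_le_ncard (neighborSet_subset_of_not_reachable htrans hxy))

theorem exists_isCutset_ncard_eq_minDeg [Finite V] (hnc : ¬G.IsCompleteGraph) :
    ∃ S, G.IsCutset S ∧ S.ncard = G.minDeg := by
  obtain ⟨u, hu⟩ : ∃ u, ¬G.IsUniversal u := not_forall.1 hnc
  have : Nonempty V := ⟨u⟩
  obtain ⟨x, hx⟩ := G.exists_deg_eq_minDeg
  have hxu : G.deg x ≤ G.deg u := hx ▸ minDeg_le_deg u
  have hx_univ : ¬G.IsUniversal x := (deg_add_two_le_card_iff_not_isUniversal x).1 <|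
    (Nat.add_le_add_right hxu 2).trans ((deg_add_two_le_card_iff_not_isUniversal u).2 hu)
  exact ⟨_, isCutset_neighborSet_of_not_isUniversal hx_univ, hx⟩

end SimpleGraph

/-- For a noncomplete `(P2 ∪ P1)`-free graph, the minimum size of a cutset equals the
minimum degree: every cutset has size at least `δ(G)`, and some cutset has size exactly
`δ(G)`. -/
theorem stmt_3 {V : Type*} [Fintype V] (G : SimpleGraph V) (hnc : ¬ G.IsCompleteGraph)
    (hfree : G.IndFree P2P1) :
    (∀ S : Set V, G.IsCutset S → G.minDeg ≤ S.ncard) ∧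
    (∃ S : Set V, G.IsCutset S ∧ S.ncard = G.minDeg) :=
  ⟨fun _ hS => hS.minDeg_le_ncard (not_adj_trans_of_indFree_P2P1 hfree),
    exists_isCutset_ncard_eq_minDeg hnc⟩
end

section
/- Let t > 0 be a real number and let G be a t-tough graph on n vertices containing a cycle C that is not a Hamilton cycle. Let H be a connected subgraph of G − V(C). If the number of vertices of C that have a neighbor in V(H) is greater than n/(t+1) − 1, then G contains a cycle C* such that V(C) ⊆ V(C*) and V(C*) ∩ V(H) ≠ ∅. -/
open SimpleGraph

variable {V : Type*}

section Aux

lemma formPerm_append_middle {α : Type*} [DecidableEq α] (l₁ l₂ : List α) (y z : α)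
    (h : (l₁ ++ y :: z :: l₂).Nodup) : (l₁ ++ y :: z :: l₂).formPerm y = z := by
  have hlen : l₁.length + 1 < (l₁ ++ y :: z :: l₂).length := by simp
  have hy : (l₁ ++ y :: z :: l₂)[l₁.length]'(by omega) = y := by
    rw [List.getElem_append_right (Nat.le_refl _)]
    simp
  have hz : (l₁ ++ y :: z :: l₂)[l₁.length + 1]'hlen = z := by
    rw [List.getElem_append_right (by omega)]
    simp
  have := List.formPerm_apply_lt_getElem _ h l₁.length hlen
  rw [hy, hz] at this
  exact this

lemma reachable_induce_of_walk {V : Type*} {G : SimpleGraph V} {s : Set V} :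
    ∀ {a b : V} (p : G.Walk a b) (_ : ∀ x ∈ p.support, x ∈ s) (ha : a ∈ s) (hb : b ∈ s),
      (G.induce s).Reachable ⟨a, ha⟩ ⟨b, hb⟩ := by
  intro a b p
  induction p with
  | nil => intro _ ha hb; rfl
  | @cons a c b hac q ih =>
    intro hp ha hb
    have hc : c ∈ s := hp c (by simp)
    have h1 : (G.induce s).Adj ⟨a, ha⟩ ⟨c, hc⟩ := hac
    exact (h1.reachable).trans (ih (fun x hx => hp x (by simp [hx])) hc hb)

lemma walk_of_induce {V : Type*} {G : SimpleGraph V} {s : Set V} :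
    ∀ {a b : ↥s} (_ : (G.induce s).Walk a b),
      ∃ q : G.Walk a.1 b.1, ∀ x ∈ q.support, x ∈ s := by
  intro a b p
  induction p with
  | @nil u => exact ⟨Walk.nil, by rintro x hx; simp at hx; subst hx; exact u.2⟩
  | @cons a c b hac q ih =>
    obtain ⟨q', hq'⟩ := ih
    have hadj : G.Adj a.1 c.1 := hac
    refine ⟨Walk.cons hadj q', ?_⟩
    rintro x hx
    simp only [Walk.support_cons, List.mem_cons] at hx
    rcases hx with rfl | hx
    · exact a.2
    · exact hq' x hx

lemma eq_of_reachable_of_isolated {W : Type*} {G' : SimpleGraph W} {a b : W}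
    (h : G'.Reachable a b) (ha : ∀ c, ¬ G'.Adj a c) : a = b := by
  obtain ⟨p⟩ := h
  cases p with
  | nil => rfl
  | cons h q => exact absurd h (ha _)

lemma support_eq_concat {V : Type*} {G : SimpleGraph V} {a b : V} (p : G.Walk a b) :
    p.support = (p.reverse.support.tail).reverse ++ [b] := by
  have h2 : p.support.reverse = b :: p.reverse.support.tail := by
    rw [← Walk.support_reverse]; exact Walk.support_eq_cons _
  have h3 := congrArg List.reverse h2
  rw [List.reverse_reverse] at h3
  rw [h3]; simp

lemma glueA {V : Type*} {G : SimpleGraph V} {x u : V} (q : G.Walk u x) (hq : q.IsPath)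
    (Q : G.Walk x u) (hQ : Q.IsPath) (hQnn : ¬ Q.Nil)
    (hsupp : ∀ w ∈ Q.support, w ∈ q.support → w = x ∨ w = u)
    (hedge : ∀ e ∈ Q.edges, e ∉ q.edges) :
    (Q.append q).IsCycle ∧ ∀ w, w ∈ Q.support ∨ w ∈ q.support → w ∈ (Q.append q).support := by
  have htrail : (Q.append q).IsTrail := by
    constructor
    rw [Walk.edges_append]
    exact List.Nodup.append hQ.isTrail.edges_nodup hq.isTrail.edges_nodup
      (fun e he he' => hedge e he he')
  have hne : Q.append q ≠ Walk.nil := by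
    intro hnil
    have := congrArg Walk.length hnil
    rw [Walk.length_append] at this
    simp only [Walk.length_nil] at this
    rw [Walk.not_nil_iff_lt_length] at hQnn
    omega
  have htail : (Q.append q).support.tail = Q.support.tail ++ q.support.tail :=
    Walk.tail_support_append Q q
  have hxQ : x ∉ Q.support.tail := by
    have := hQ.support_nodup
    rw [Q.support_eq_cons] at this
    exact (List.nodup_cons.mp this).1
  have huq : u ∉ q.support.tail := by
    have := hq.support_nodup
    rw [q.support_eq_cons] at this
    exact (List.nodup_cons.mp this).1
  refine ⟨⟨⟨htrail, hne⟩, ?_⟩, ?_⟩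
  · rw [htail]
    refine List.Nodup.append (hQ.support_nodup.tail) (hq.support_nodup.tail) ?_
    intro w hw hw'
    have hwQ : w ∈ Q.support := List.mem_of_mem_tail hw
    have hwq : w ∈ q.support := List.mem_of_mem_tail hw'
    rcases hsupp w hwQ hwq with rfl | rfl
    · exact hxQ hw
    · exact huq hw'
  · intro w hw
    rw [Walk.mem_support_append_iff]
    rcases hw with hw | hw
    · exact Or.inl hw
    · exact Or.inr hw

lemma glueB {V : Type*} {G : SimpleGraph V} {x y u z : V} (q₁ : G.Walk u y) (q₃ : G.Walk z x)
    (h₂ : G.Adj y z)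
    (hq : (q₁.append (Walk.cons h₂ q₃)).IsPath) (hchord : G.Adj u z)
    (P : G.Walk x y) (hP : P.IsPath) (hxy : x ≠ y)
    (hsupp : ∀ w ∈ P.support, w ∈ (q₁.append (Walk.cons h₂ q₃)).support → w = x ∨ w = y)
    (hedgeP : ∀ e ∈ P.edges, e ∉ (q₁.append (Walk.cons h₂ q₃)).edges ∧ e ≠ s(u, z)) :
    (P.append (q₁.reverse.append (Walk.cons hchord q₃))).IsCycle ∧
      ∀ w, w ∈ (q₁.append (Walk.cons h₂ q₃)).support →
        w ∈ (P.append (q₁.reverse.append (Walk.cons hchord q₃))).support := by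
  have hqsup : (q₁.append (Walk.cons h₂ q₃)).support = q₁.support ++ q₃.support := by
    rw [Walk.support_append, Walk.support_cons, List.tail_cons]
  have nodupq : (q₁.support ++ q₃.support).Nodup := by
    rw [← hqsup]; exact hq.support_nodup
  have hnd := List.nodup_append'.mp nodupq
  have disj13 : ∀ w ∈ q₁.support, w ∉ q₃.support := fun w hw hw' => hnd.2.2 hw hw'
  have hzq₁ : z ∉ q₁.support := fun h => disj13 z h q₃.start_mem_support
  have huq₃ : u ∉ q₃.support := disj13 u q₁.start_mem_support
  have hyq₃ : y ∉ q₃.support := disj13 y q₁.end_mem_support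
  have qedges : (q₁.append (Walk.cons h₂ q₃)).edges = q₁.edges ++ (s(y, z) :: q₃.edges) := by
    rw [Walk.edges_append, Walk.edges_cons]
  have trailq : (q₁.edges ++ (s(y, z) :: q₃.edges)).Nodup := by
    rw [← qedges]; exact hq.isTrail.edges_nodup
  have hte := List.nodup_append'.mp trailq
  have hq₁nd : q₁.support.Nodup := hnd.1
  have hq₃nd : q₃.support.Nodup := hnd.2.1
  have htrail : (P.append (q₁.reverse.append (Walk.cons hchord q₃))).IsTrail := by
    constructor
    rw [Walk.edges_append, Walk.edges_append, Walk.edges_cons, Walk.edges_reverse]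
    refine List.Nodup.append hP.isTrail.edges_nodup ?_ ?_
    · refine List.Nodup.append (by simpa using hte.1) ?_ ?_
      · exact List.nodup_cons.mpr ⟨fun hmem => huq₃ (q₃.fst_mem_support_of_mem_edges hmem),
          (List.nodup_cons.mp hte.2.1).2⟩
      · intro e he he'
        rw [List.mem_reverse] at he
        rcases List.mem_cons.mp he' with rfl | he'
        · exact hzq₁ (q₁.snd_mem_support_of_mem_edges he)
        · exact hte.2.2 he (List.mem_cons_of_mem _ he')
    · intro e he he'
      rcases List.mem_append.mp he' with he' | he'
      · rw [List.mem_reverse] at he'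
        exact (hedgeP e he).1 (by rw [qedges]; exact List.mem_append_left _ he')
      · rcases List.mem_cons.mp he' with rfl | he'
        · exact (hedgeP _ he).2 rfl
        · exact (hedgeP e he).1
            (by rw [qedges]; exact List.mem_append_right _ (List.mem_cons_of_mem _ he'))
  have hPnn : ¬ P.Nil := Walk.not_nil_of_ne hxy
  have hne : P.append (q₁.reverse.append (Walk.cons hchord q₃)) ≠ Walk.nil := by
    intro hnil
    have := congrArg Walk.length hnil
    rw [Walk.length_append] at this
    simp only [Walk.length_nil] at this
    rw [Walk.not_nil_iff_lt_length] at hPnn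
    omega
  have hinner : (q₁.reverse.append (Walk.cons hchord q₃)).support
      = q₁.reverse.support ++ q₃.support := by
    rw [Walk.support_append, Walk.support_cons, List.tail_cons]
  have hinnertail : (q₁.reverse.append (Walk.cons hchord q₃)).support.tail
      = q₁.reverse.support.tail ++ q₃.support := by
    rw [hinner, List.tail_append_of_ne_nil (Walk.support_ne_nil _)]
  have hrevnd : q₁.reverse.support.Nodup := by
    rw [Walk.support_reverse]; exact List.nodup_reverse.mpr hq₁nd
  have hrevcons : q₁.reverse.support = y :: q₁.reverse.support.tail :=
    Walk.support_eq_cons _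
  have hBsub : ∀ w ∈ q₁.reverse.support.tail, w ∈ q₁.support ∧ w ≠ y := by
    intro w hw
    constructor
    · have : w ∈ q₁.reverse.support := List.mem_of_mem_tail hw
      rwa [Walk.support_reverse, List.mem_reverse] at this
    · intro rfl_eq; subst rfl_eq
      have := hrevnd
      rw [hrevcons] at this
      exact (List.nodup_cons.mp this).1 hw
  have htail : (P.append (q₁.reverse.append (Walk.cons hchord q₃))).support.tail
      = P.support.tail ++ (q₁.reverse.support.tail ++ q₃.support) := by
    rw [Walk.tail_support_append, hinnertail]
  have hAx : ∀ w ∈ P.support.tail, w ≠ x := by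
    intro w hw rfl_eq; subst rfl_eq
    have := hP.support_nodup
    rw [P.support_eq_cons] at this
    exact (List.nodup_cons.mp this).1 hw
  refine ⟨⟨⟨htrail, hne⟩, ?_⟩, ?_⟩
  · rw [htail]
    refine List.Nodup.append hP.support_nodup.tail ?_ ?_
    · refine List.Nodup.append hrevnd.tail hq₃nd ?_
      intro w hw hw'
      exact disj13 w (hBsub w hw).1 hw'
    · intro w hw hw'
      have hwP : w ∈ P.support := List.mem_of_mem_tail hw
      rcases List.mem_append.mp hw' with hw' | hw'
      · have h1 := hBsub w hw'
        rcases hsupp w hwP (by rw [hqsup]; exact List.mem_append_left _ h1.1) with h2 | h2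
        · exact hAx w hw h2
        · exact h1.2 h2
      · rcases hsupp w hwP (by rw [hqsup]; exact List.mem_append_right _ hw') with h2 | h2
        · exact hAx w hw h2
        · rw [h2] at hw'; exact hyq₃ hw'
  · intro w hw
    rw [hqsup, List.mem_append] at hw
    rw [Walk.mem_support_append_iff]
    rcases hw with hw | hw
    · right
      rw [Walk.mem_support_append_iff]
      left
      rwa [Walk.support_reverse, List.mem_reverse]
    · right
      rw [Walk.mem_support_append_iff]
      right
      rw [Walk.support_cons]
      exact List.mem_cons_of_mem _ hw

lemma compCount_eq_aux {V : Type*} [Fintype V] {G : SimpleGraph V} (U A : Set V) (b : V)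
    (hbU : b ∈ U) (hbA : b ∉ A) (hA : A ⊆ U)
    (hiso : ∀ w ∈ A, ∀ z ∈ U, ¬ G.Adj w z)
    (hconn : ∀ z (hz : z ∈ U), z ∉ A → (G.induce U).Reachable ⟨z, hz⟩ ⟨b, hbU⟩) :
    G.compCount Uᶜ = A.ncard + 1 := by
  classical
  rw [SimpleGraph.compCount, show Uᶜᶜ = U from compl_compl U]
  have hisol : ∀ (a : V) (ha : a ∈ A) (c : ↥U), ¬ (G.induce U).Adj ⟨a, hA ha⟩ c :=
    fun a ha c hadj => hiso a ha c.1 c.2 hadj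
  let f : (↥A ⊕ Unit) → (G.induce U).ConnectedComponent :=
    Sum.elim (fun a => (G.induce U).connectedComponentMk ⟨a.1, hA a.2⟩)
      (fun _ => (G.induce U).connectedComponentMk ⟨b, hbU⟩)
  have hbij : Function.Bijective f := by
    constructor
    · rintro (a | _) (a' | _) h <;>
        simp only [f, Sum.elim_inl, Sum.elim_inr] at h
      · have hr := (SimpleGraph.ConnectedComponent.eq).mp h
        have := eq_of_reachable_of_isolated hr (hisol a.1 a.2)
        simp only [Subtype.mk.injEq] at this
        exact congrArg Sum.inl (Subtype.ext this)
      · have hr := (SimpleGraph.ConnectedComponent.eq).mp h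
        have := eq_of_reachable_of_isolated hr (hisol a.1 a.2)
        simp only [Subtype.mk.injEq] at this
        exact absurd (this ▸ a.2) hbA
      · have hr := (SimpleGraph.ConnectedComponent.eq).mp h.symm
        have := eq_of_reachable_of_isolated hr (hisol a'.1 a'.2)
        simp only [Subtype.mk.injEq] at this
        exact absurd (this ▸ a'.2) hbA
      · rfl
    · intro c
      induction c using SimpleGraph.ConnectedComponent.ind with
      | _ z =>
        obtain ⟨z, hz⟩ := z
        by_cases hzA : z ∈ A
        · exact ⟨Sum.inl ⟨z, hzA⟩, by simp only [f, Sum.elim_inl]⟩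
        · exact ⟨Sum.inr Unit.unit, by
            simp only [f, Sum.elim_inr]
            exact (SimpleGraph.ConnectedComponent.sound (hconn z hz hzA)).symm⟩
  rw [← Nat.card_eq_of_bijective f hbij, Nat.card_sum, Nat.card_coe_set_eq]
  simp

end Aux

/-- For `t > 0`, a `t`-tough graph `G` on `n` vertices with a non-Hamiltonian cycle `C`, and a
connected subgraph `H` of `G - V(C)`: if more than `n/(t+1) - 1` vertices of `C` have a
neighbor in `V(H)`, then `C` extends to a cycle `C*` with `V(C) ⊆ V(C*)` and
`V(C*) ∩ V(H) ≠ ∅`. -/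
theorem stmt_7 {V : Type*} [Fintype V] [DecidableEq V] (t : ℝ) (ht : 0 < t)
    (G : SimpleGraph V) (htough : G.Tough t)
    (v : V) (C : G.Walk v v) (hC : C.IsCycle) (hnotham : ¬ C.IsHamiltonianCycle)
    (H : Set V) (hHdisj : ∀ x ∈ H, x ∉ C.support) (hHconn : (G.induce H).Connected)
    (hnbr : (Fintype.card V : ℝ) / (t + 1) - 1 <
      (({x | x ∈ C.support ∧ ∃ y ∈ H, G.Adj x y} : Set V).ncard : ℝ)) :
    ∃ (w : V) (C' : G.Walk w w), C'.IsCycle ∧ (∀ x ∈ C.support, x ∈ C'.support) ∧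
      ∃ y ∈ H, y ∈ C'.support := by
  classical
  by_contra hcon
  push_neg at hcon
  obtain ⟨⟨h₀, h₀H⟩⟩ := hHconn.nonempty
  -- the component D of G - V(C) containing H
  set D : Set V := {w | ∃ p : G.Walk h₀ w, ∀ x ∈ p.support, x ∉ C.support} with hDdef
  have hDsub : ∀ {w : V} (p : G.Walk h₀ w), (∀ x ∈ p.support, x ∉ C.support) →
      ∀ x ∈ p.support, x ∈ D := by
    intro w p hp x hx
    exact ⟨p.takeUntil x hx, fun z hz => hp z (Walk.support_takeUntil_subset p hx hz)⟩
  have hh₀D : h₀ ∈ D := by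
    refine ⟨Walk.nil, ?_⟩
    intro x hx
    simp only [Walk.support_nil, List.mem_singleton] at hx
    subst hx
    exact hHdisj _ h₀H
  have hDC : ∀ w ∈ D, w ∉ C.support := by
    rintro w ⟨p, hp⟩
    exact hp w p.end_mem_support
  have hDwalk : ∀ w ∈ D, ∀ z ∈ D, ∃ p : G.Walk w z, p.IsPath ∧ ∀ x ∈ p.support, x ∈ D := by
    rintro w ⟨pw, hpw⟩ z ⟨pz, hpz⟩
    refine ⟨(pw.reverse.append pz).bypass, Walk.bypass_isPath _, ?_⟩
    intro x hx
    have hx' := Walk.support_bypass_subset _ hx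
    rw [Walk.mem_support_append_iff] at hx'
    rcases hx' with hx' | hx'
    · rw [Walk.support_reverse, List.mem_reverse] at hx'
      exact hDsub pw hpw x hx'
    · exact hDsub pz hpz x hx'
  have hHD : ∀ hh ∈ H, hh ∈ D := by
    intro hh hhH
    obtain ⟨pw⟩ := hHconn.preconnected ⟨h₀, h₀H⟩ ⟨hh, hhH⟩
    obtain ⟨q, hq⟩ := walk_of_induce pw
    exact ⟨q, fun x hx => hHdisj x (hq x hx)⟩
  set N : Set V := {x | x ∈ C.support ∧ ∃ y ∈ H, G.Adj x y} with hNdef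
  set l : List V := C.support.tail with hldef
  have hlnd : l.Nodup := hC.support_nodup
  have hsupc : C.support = v :: l := C.support_eq_cons
  have hlne : l ≠ [] := by
    have h3 := hC.three_le_length
    have h4 := C.length_support
    rw [hsupc] at h4
    simp only [List.length_cons] at h4
    intro h
    rw [h] at h4
    simp only [List.length_nil] at h4
    omega
  have hvl : v ∈ l := by
    have h1 : C.support = (C.reverse.support.tail).reverse ++ [v] := support_eq_concat C
    rcases hT : (C.reverse.support.tail).reverse with _ | ⟨a, T'⟩
    · rw [hT, List.nil_append, hsupc] at h1
      exact absurd (List.cons_eq_cons.mp h1).2 hlne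
    · rw [hT, hsupc] at h1
      simp only [List.cons_append] at h1
      rw [(List.cons_eq_cons.mp h1).2]
      simp
  have hmemC : ∀ w : V, w ∈ C.support ↔ w ∈ l := by
    intro w
    rw [hsupc]
    simp only [List.mem_cons]
    constructor
    · rintro (rfl | h)
      · exact hvl
      · exact h
    · exact Or.inr
  set σ : Equiv.Perm V := l.formPerm with hσdef
  have hσmem : ∀ w ∈ C.support, σ w ∈ C.support := by
    intro w hw
    rw [hmemC] at hw ⊢
    exact List.formPerm_mem_iff_mem.mpr hw
  -- key decomposition at a cycle vertex
  have key : ∀ x, x ∈ C.support → ∃ (u : V) (_ : G.Adj x u) (q : G.Walk u x),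
      u = σ x ∧ q.IsPath ∧ (∀ w, w ∈ C.support ↔ w ∈ x :: q.support) ∧
      (σ : Equiv.Perm V) = q.support.formPerm := by
    intro x hx
    have hrot : (C.rotate x hx).IsCycle := hC.rotate hx
    obtain ⟨u, hadj, q, hqe⟩ := Walk.not_nil_iff.mp hrot.not_nil
    have htail : (C.rotate x hx).support.tail = q.support := by
      rw [hqe, Walk.support_cons, List.tail_cons]
    have hrotd : q.support ~r l := by rw [← htail]; exact C.support_rotate x hx
    have hσq : (σ : Equiv.Perm V) = q.support.formPerm := by
      rw [hσdef]
      exact List.formPerm_eq_of_isRotated hlnd hrotd.symm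
    have hqpath : q.IsPath := by rw [Walk.isPath_def, ← htail]; exact hrot.support_nodup
    have hqrev : q.support = (q.reverse.support.tail).reverse ++ [x] := support_eq_concat q
    have hTne : (q.reverse.support.tail).reverse ≠ [] := by
      intro h
      rw [h, List.nil_append] at hqrev
      have h5 : u :: q.support.tail = [x] := by rw [← q.support_eq_cons, hqrev]
      exact hadj.ne (List.cons_eq_cons.mp h5).1.symm
    obtain ⟨a, as, ha⟩ := List.exists_cons_of_ne_nil hTne
    have hqs : q.support = a :: (as ++ [x]) := by rw [hqrev, ha]; simp
    have hau : a = u := by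
      have h5 : u :: q.support.tail = a :: (as ++ [x]) := by rw [← q.support_eq_cons, hqs]
      exact ((List.cons_eq_cons.mp h5).1).symm
    rw [hau] at hqs
    have hu : u = σ x := by
      rw [hσq, hqs]
      exact (List.formPerm_cons_concat_apply_last u x as).symm
    have hmemq : ∀ w, w ∈ C.support ↔ w ∈ x :: q.support := by
      intro w
      constructor
      · intro hw
        exact List.mem_cons_of_mem _ (hrotd.mem_iff.mpr ((hmemC w).mp hw))
      · intro hw
        rcases List.mem_cons.mp hw with rfl | hw
        · exact hx
        · exact (hmemC w).mpr (hrotd.mem_iff.mp hw)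
    exact ⟨u, hadj, q, hu, hqpath, hmemq, hσq⟩
  -- consequence (a): successors of N-vertices have no neighbor in D
  have ha' : ∀ x ∈ N, ∀ d ∈ D, ¬ G.Adj (σ x) d := by
    rintro x ⟨hxC, hh, hhH, hxh⟩ d hd hadj'
    obtain ⟨u, hadj, q, hu, hqpath, hmemq, hσq⟩ := key x hxC
    subst hu
    obtain ⟨R, hRpath, hRD⟩ := hDwalk hh (hHD hh hhH) d hd
    have hdu : G.Adj d (σ x) := hadj'.symm
    set Q : G.Walk x (σ x) := Walk.cons hxh (R.concat hdu) with hQdef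
    have hQsupp : Q.support = x :: (R.support ++ [σ x]) := by
      rw [hQdef, Walk.support_cons, Walk.support_concat]
    have hσxC : σ x ∈ C.support := hσmem x hxC
    have hqsubC : ∀ w ∈ q.support, w ∈ C.support :=
      fun w hw => (hmemq w).mpr (List.mem_cons_of_mem _ hw)
    have hQpath : Q.IsPath := by
      rw [Walk.isPath_def, hQsupp]
      refine List.nodup_cons.mpr ⟨?_, ?_⟩
      · intro hmem
        rcases List.mem_append.mp hmem with hm | hm
        · exact hDC x (hRD x hm) hxC
        · simp only [List.mem_singleton] at hm
          exact hadj.ne hm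
      · refine List.nodup_append'.mpr ⟨hRpath.support_nodup, List.nodup_singleton _, ?_⟩
        intro w hw hw'
        simp only [List.mem_singleton] at hw'
        subst hw'
        exact hDC _ (hRD _ hw) hσxC
    have hQnn : ¬ Q.Nil := by rw [hQdef]; exact Walk.not_nil_cons
    have hsupp : ∀ w ∈ Q.support, w ∈ q.support → w = x ∨ w = σ x := by
      intro w hwQ hwq
      rw [hQsupp] at hwQ
      rcases List.mem_cons.mp hwQ with rfl | hwQ
      · exact Or.inl rfl
      · rcases List.mem_append.mp hwQ with hm | hm
        · exact absurd (hqsubC w hwq) (hDC w (hRD w hm))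
        · simp only [List.mem_singleton] at hm
          exact Or.inr hm
    have hedge : ∀ e ∈ Q.edges, e ∉ q.edges := by
      intro e
      induction e using Sym2.ind with
      | _ a b =>
        intro heQ heq
        have haC : a ∈ C.support := hqsubC a (q.fst_mem_support_of_mem_edges heq)
        have hbC : b ∈ C.support := hqsubC b (q.snd_mem_support_of_mem_edges heq)
        rw [hQdef, Walk.edges_cons, Walk.edges_concat, List.concat_eq_append] at heQ
        rcases List.mem_cons.mp heQ with he | he
        · rw [Sym2.eq_iff] at he
          rcases he with ⟨rfl, rfl⟩ | ⟨rfl, rfl⟩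
          · exact hHdisj b hhH hbC
          · exact hHdisj a hhH haC
        · rcases List.mem_append.mp he with he | he
          · exact hDC a (hRD a (R.fst_mem_support_of_mem_edges he)) haC
          · simp only [List.mem_singleton] at he
            rw [Sym2.eq_iff] at he
            rcases he with ⟨rfl, rfl⟩ | ⟨rfl, rfl⟩
            · exact hDC a hd haC
            · exact hDC b hd hbC
    obtain ⟨hcyc, hcov⟩ := glueA q hqpath Q hQpath hQnn hsupp hedge
    have hcov' : ∀ w ∈ C.support, w ∈ (Q.append q).support := by
      intro w hw
      rcases List.mem_cons.mp ((hmemq w).mp hw) with rfl | hw'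
      · exact hcov w (Or.inl Q.start_mem_support)
      · exact hcov w (Or.inr hw')
    have hhQ : hh ∈ Q.support := by
      rw [hQsupp]
      exact List.mem_cons_of_mem _ (List.mem_append_left _ R.start_mem_support)
    exact hcon x (Q.append q) hcyc hcov' hh hhH (hcov hh (Or.inl hhQ))
  -- consequence (b): no chords between successors of N-vertices
  have hb' : ∀ x ∈ N, ∀ y ∈ N, x ≠ y → ¬ G.Adj (σ x) (σ y) := by
    rintro x ⟨hxC, hx1, hx1H, hxh1⟩ y ⟨hyC, hy1, hy1H, hyh1⟩ hxy hchord
    obtain ⟨u, hadj, q, hu, hqpath, hmemq, hσq⟩ := key x hxC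
    subst hu
    have hyq : y ∈ q.support := by
      rcases List.mem_cons.mp ((hmemq y).mp hyC) with h | h
      · exact absurd h.symm hxy
      · exact h
    have hqsubC : ∀ w ∈ q.support, w ∈ C.support :=
      fun w hw => (hmemq w).mpr (List.mem_cons_of_mem _ hw)
    set q₁ := q.takeUntil y hyq with hq₁def
    set q₂ := q.dropUntil y hyq with hq₂def
    have hspec : q₁.append q₂ = q := q.take_spec hyq
    have hq₂nn : ¬ q₂.Nil := Walk.not_nil_of_ne (Ne.symm hxy)
    obtain ⟨z, hadjyz, q₃, hq₃e⟩ := Walk.not_nil_iff.mp hq₂nn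
    have hqdec : q₁.append (Walk.cons hadjyz q₃) = q := by rw [← hq₃e]; exact hspec
    have hqsup : q.support = q₁.support ++ q₃.support := by
      rw [← hqdec, Walk.support_append, Walk.support_cons, List.tail_cons]
    have hz : z = σ y := by
      have hmid : q.support
          = (q₁.reverse.support.tail).reverse ++ (y :: z :: q₃.support.tail) := by
        rw [hqsup, support_eq_concat q₁, q₃.support_eq_cons]
        simp only [List.append_assoc, List.singleton_append, List.tail_cons]
      have hnd : q.support.Nodup := hqpath.support_nodup
      rw [hmid] at hnd
      have h6 := formPerm_append_middle _ _ y z hnd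
      rw [hσq, hmid]
      exact h6.symm
    subst hz
    obtain ⟨RH, hRHpath, hRHD⟩ := hDwalk hx1 (hHD hx1 hx1H) hy1 (hHD hy1 hy1H)
    have hy1y : G.Adj hy1 y := hyh1.symm
    set P : G.Walk x y := Walk.cons hxh1 (RH.concat hy1y) with hPdef
    have hPsupp : P.support = x :: (RH.support ++ [y]) := by
      rw [hPdef, Walk.support_cons, Walk.support_concat]
    have hPpath : P.IsPath := by
      rw [Walk.isPath_def, hPsupp]
      refine List.nodup_cons.mpr ⟨?_, ?_⟩
      · intro hmem
        rcases List.mem_append.mp hmem with hm | hm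
        · exact hDC x (hRHD x hm) hxC
        · simp only [List.mem_singleton] at hm
          exact hxy hm
      · refine List.nodup_append'.mpr ⟨hRHpath.support_nodup, List.nodup_singleton _, ?_⟩
        intro w hw hw'
        simp only [List.mem_singleton] at hw'
        subst hw'
        exact hDC _ (hRHD _ hw) hyC
    have hq' : (q₁.append (Walk.cons hadjyz q₃)).IsPath := by rw [hqdec]; exact hqpath
    have hsupp' : ∀ w ∈ P.support,
        w ∈ (q₁.append (Walk.cons hadjyz q₃)).support → w = x ∨ w = y := by
      intro w hwP hwq
      rw [hqdec] at hwq
      have hwC : w ∈ C.support := hqsubC w hwq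
      rw [hPsupp] at hwP
      rcases List.mem_cons.mp hwP with rfl | hwP
      · exact Or.inl rfl
      · rcases List.mem_append.mp hwP with hm | hm
        · exact absurd hwC (hDC w (hRHD w hm))
        · simp only [List.mem_singleton] at hm
          exact Or.inr hm
    have hedgeP : ∀ e ∈ P.edges,
        e ∉ (q₁.append (Walk.cons hadjyz q₃)).edges ∧ e ≠ s(σ x, σ y) := by
      intro e
      induction e using Sym2.ind with
      | _ a b =>
        intro heP
        have hDmem : a ∈ D ∨ b ∈ D := by
          rw [hPdef, Walk.edges_cons, Walk.edges_concat, List.concat_eq_append] at heP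
          rcases List.mem_cons.mp heP with he | he
          · rw [Sym2.eq_iff] at he
            rcases he with ⟨he1, he2⟩ | ⟨he1, he2⟩
            · exact Or.inr (by rw [he2]; exact hHD hx1 hx1H)
            · exact Or.inl (by rw [he1]; exact hHD hx1 hx1H)
          · rcases List.mem_append.mp he with he | he
            · exact Or.inl (hRHD a (RH.fst_mem_support_of_mem_edges he))
            · simp only [List.mem_singleton] at he
              rw [Sym2.eq_iff] at he
              rcases he with ⟨he1, he2⟩ | ⟨he1, he2⟩
              · exact Or.inl (by rw [he1]; exact hHD hy1 hy1H)
              · exact Or.inr (by rw [he2]; exact hHD hy1 hy1H)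
        constructor
        · intro heq
          rw [hqdec] at heq
          rcases hDmem with h | h
          · exact hDC _ h (hqsubC a (q.fst_mem_support_of_mem_edges heq))
          · exact hDC _ h (hqsubC b (q.snd_mem_support_of_mem_edges heq))
        · intro heeq
          rw [Sym2.eq_iff] at heeq
          have hσxC := hσmem x hxC
          have hσyC := hσmem y hyC
          rcases heeq with ⟨ha1, hb1⟩ | ⟨ha1, hb1⟩
          · subst ha1; subst hb1
            rcases hDmem with h | h
            · exact hDC _ h hσxC
            · exact hDC _ h hσyC
          · subst ha1; subst hb1
            rcases hDmem with h | h
            · exact hDC _ h hσyC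
            · exact hDC _ h hσxC
    obtain ⟨hcyc, hcov⟩ := glueB q₁ q₃ hadjyz hq' hchord P hPpath hxy hsupp' hedgeP
    have hcov' : ∀ w ∈ C.support,
        w ∈ (P.append (q₁.reverse.append (Walk.cons hchord q₃))).support := by
      intro w hw
      rcases List.mem_cons.mp ((hmemq w).mp hw) with rfl | hw'
      · rw [Walk.mem_support_append_iff]
        exact Or.inl P.start_mem_support
      · exact hcov w (by rw [hqdec]; exact hw')
    have hx1P : hx1 ∈ (P.append (q₁.reverse.append (Walk.cons hchord q₃))).support := by
      rw [Walk.mem_support_append_iff]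
      left
      rw [hPsupp]
      exact List.mem_cons_of_mem _ (List.mem_append_left _ RH.start_mem_support)
    exact hcon x _ hcyc hcov' hx1 hx1H hx1P
  -- counting via toughness
  have ht1 : (0 : ℝ) < t + 1 := by linarith
  rcases Set.eq_empty_or_nonempty N with hN0 | hNne
  · -- no vertex of C has a neighbor in H
    have hk0 : N.ncard = 0 := by rw [hN0]; simp
    rw [hk0] at hnbr
    have hnadj : ¬ G.Adj h₀ v := by
      intro hadj
      have : v ∈ N := ⟨C.start_mem_support, h₀, h₀H, hadj.symm⟩
      rw [hN0] at this
      exact this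
    have hne0 : h₀ ≠ v := fun h => hHdisj h₀ h₀H (h ▸ C.start_mem_support)
    set U : Set V := {h₀, v} with hUdef
    have hcc : G.compCount Uᶜ = ({v} : Set V).ncard + 1 := by
      refine compCount_eq_aux U {v} h₀ (by simp [hUdef]) (by simp [hne0]) (by simp [hUdef]) ?_ ?_
      · rintro w hw z hz hadjwz
        simp only [Set.mem_singleton_iff] at hw
        subst hw
        rcases hz with rfl | hz
        · exact hnadj hadjwz.symm
        · simp only [Set.mem_singleton_iff] at hz
          subst hz
          exact G.loopless.irrefl _ hadjwz
      · intro z hz hzA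
        rcases hz with rfl | hz
        · exact Reachable.refl _
        · simp only [Set.mem_singleton_iff] at hz
          exact absurd hz hzA
    have hcut : G.IsCutset Uᶜ := by
      rw [SimpleGraph.IsCutset, hcc, Set.ncard_singleton]
    have htuf := htough Uᶜ hcut
    rw [hcc, Set.ncard_singleton] at htuf
    have hU2 : U.ncard = 2 := Set.ncard_pair hne0
    have hcompl := Set.ncard_add_ncard_compl U
    rw [Nat.card_eq_fintype_card, hU2] at hcompl
    have hcard2 : 2 ≤ Fintype.card V := by omega
    have hUc : (Uᶜ.ncard : ℝ) = (Fintype.card V : ℝ) - 2 := by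
      have : Uᶜ.ncard = Fintype.card V - 2 := by omega
      rw [this, Nat.cast_sub hcard2]
      norm_num
    rw [hUc] at htuf
    have h1 : (Fintype.card V : ℝ) < t + 1 := by
      have h6 : (Fintype.card V : ℝ) / (t + 1) < 1 := by
        push_cast at hnbr
        linarith
      calc (Fintype.card V : ℝ) = (Fintype.card V : ℝ) / (t + 1) * (t + 1) := by field_simp
        _ < 1 * (t + 1) := mul_lt_mul_of_pos_right h6 ht1
        _ = t + 1 := one_mul _
    push_cast at htuf
    linarith
  · -- main case
    obtain ⟨x₀, hx₀⟩ := hNne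
    set Np : Set V := σ '' N with hNpdef
    have hNpC : ∀ w ∈ Np, w ∈ C.support := by
      rintro w ⟨x, hx, rfl⟩
      exact hσmem x hx.1
    set U : Set V := Np ∪ D with hUdef
    have hNpD : ∀ w ∈ Np, w ∉ D := fun w hw hd => hDC w hd (hNpC w hw)
    have hcc : G.compCount Uᶜ = Np.ncard + 1 := by
      refine compCount_eq_aux U Np h₀ (Or.inr hh₀D) (fun h => hNpD h₀ h hh₀D)
        (fun w hw => Or.inl hw) ?_ ?_
      · rintro w hw z hz hadjwz
        rcases hz with hzNp | hzD
        · obtain ⟨xw, hxw, rfl⟩ := hw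
          obtain ⟨xz, hxz, rfl⟩ := hzNp
          by_cases hxx : xw = xz
          · subst hxx
            exact G.loopless.irrefl _ hadjwz
          · exact hb' xw hxw xz hxz hxx hadjwz
        · obtain ⟨xw, hxw, rfl⟩ := hw
          exact ha' xw hxw z hzD hadjwz
      · intro z hz hzA
        have hzD : z ∈ D := by
          rcases hz with h | h
          · exact absurd h hzA
          · exact h
        obtain ⟨p, hp, hpD⟩ := hDwalk z hzD h₀ hh₀D
        exact reachable_induce_of_walk p (fun x hx => Or.inr (hpD x hx)) _ _
    have hNppos : 1 ≤ Np.ncard :=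
      (Set.ncard_pos (Set.toFinite _)).mpr ⟨σ x₀, x₀, hx₀, rfl⟩
    have hcut : G.IsCutset Uᶜ := by
      rw [SimpleGraph.IsCutset, hcc]
      omega
    have htuf := htough Uᶜ hcut
    rw [hcc] at htuf
    have hNpcard : Np.ncard = N.ncard := Set.ncard_image_of_injective N σ.injective
    have hDpos : 1 ≤ D.ncard := (Set.ncard_pos (Set.toFinite _)).mpr ⟨h₀, hh₀D⟩
    have hUcard : U.ncard = Np.ncard + D.ncard := by
      rw [hUdef]
      exact Set.ncard_union_eq (Set.disjoint_left.mpr hNpD) (Set.toFinite _) (Set.toFinite _)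
    have hcompl := Set.ncard_add_ncard_compl U
    rw [Nat.card_eq_fintype_card] at hcompl
    have hUle : U.ncard ≤ Fintype.card V := by omega
    have hUc : (Uᶜ.ncard : ℝ) = (Fintype.card V : ℝ) - U.ncard := by
      have h9 : Uᶜ.ncard = Fintype.card V - U.ncard := by omega
      rw [h9, Nat.cast_sub hUle]
    set k := N.ncard with hkdef
    have htuf' : t * ((k : ℝ) + 1) ≤ (Fintype.card V : ℝ) - k - D.ncard := by
      rw [hUc] at htuf
      push_cast at htuf
      rw [hNpcard] at htuf
      have h10 : (U.ncard : ℝ) = (k : ℝ) + D.ncard := by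
        rw [hUcard, hNpcard]
        push_cast
        ring
      linarith [htuf, h10.le, h10.ge]
    have hD1 : (1 : ℝ) ≤ (D.ncard : ℝ) := by exact_mod_cast hDpos
    have h7 : ((k : ℝ) + 1) * (t + 1) ≤ Fintype.card V := by
      have hexp : ((k : ℝ) + 1) * (t + 1) = t * ((k : ℝ) + 1) + (k + 1) := by ring
      linarith
    have h5 : (Fintype.card V : ℝ) < ((k : ℝ) + 1) * (t + 1) := by
      have h6 : (Fintype.card V : ℝ) / (t + 1) < (k : ℝ) + 1 := by linarith
      calc (Fintype.card V : ℝ) = (Fintype.card V : ℝ) / (t + 1) * (t + 1) := by field_simp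
        _ < ((k : ℝ) + 1) * (t + 1) := mul_lt_mul_of_pos_right h6 ht1
    linarith
end

section
/- Let G be a bipartite graph with partite sets X and Y, and let f be a function from X to the positive integers. If |N_G(S)| ≥ Σ_{v ∈ S} f(v) for every S ⊆ X, then G has a subgraph H such that X ⊆ V(H), d_H(v) = f(v) for every v ∈ X, and d_H(u) = 1 for every u ∈ Y ∩ V(H). -/
open SimpleGraph

variable {V : Type*}

/-- Akiyama–Kano: in a bipartite graph with parts `X` and `Y`, if
`|N_G(S)| ≥ Σ_{v ∈ S} f(v)` for every `S ⊆ X`, where `f` maps `X` to positive integers,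
then there is a subgraph `H` with `X ⊆ V(H)`, `d_H(v) = f(v)` for `v ∈ X`, and `d_H(u) = 1`
for `u ∈ Y ∩ V(H)`. -/
theorem stmt_10 {V : Type*} [Fintype V] [DecidableEq V] (G : SimpleGraph V) (X Y : Set V)
    (hcover : ∀ v : V, v ∈ X ∨ v ∈ Y) (hdisj : Disjoint X Y)
    (hbip : ∀ u v : V, G.Adj u v → (u ∈ X ∧ v ∈ Y) ∨ (u ∈ Y ∧ v ∈ X))
    (f : V → ℕ) (hf : ∀ x ∈ X, 1 ≤ f x)
    (hhall : ∀ S : Finset V, ↑S ⊆ X →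
      ∑ v ∈ S, f v ≤ (((⋃ x ∈ S, G.neighborSet x) \ ↑S : Set V)).ncard) :
    ∃ H : G.Subgraph, X ⊆ H.verts ∧
      (∀ v ∈ X, (H.neighborSet v).ncard = f v) ∧
      (∀ u ∈ Y, u ∈ H.verts → (H.neighborSet u).ncard = 1) := by
  classical
  -- index type: f x copies of each x ∈ X
  set ι := Σ x : {v // v ∈ X}, Fin (f ↑x) with hι
  set t : ι → Finset V := fun i => G.neighborFinset ↑i.1 with ht
  -- Hall condition
  have hall : ∀ s : Finset ι, s.card ≤ (s.biUnion t).card := by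
    intro s
    set S : Finset V := s.image (fun i => ↑i.1) with hS
    have hSX : ↑S ⊆ X := by
      intro v hv
      simp only [hS, Finset.coe_image, Set.mem_image] at hv
      obtain ⟨i, _, rfl⟩ := hv
      exact i.1.2
    have h1 : s.card ≤ ∑ x ∈ S, f x := by
      rw [Finset.card_eq_sum_card_fiberwise (f := fun i : ι => (↑i.1 : V)) (t := S)
        (fun i hi => Finset.mem_image_of_mem _ hi)]
      apply Finset.sum_le_sum
      intro x hx
      have : ((s.filter fun i : ι => (↑i.1 : V) = x).image
          (fun i : ι => (i.2 : ℕ))).card ≤ (Finset.range (f x)).card := by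
        apply Finset.card_le_card
        intro n hn
        simp only [Finset.mem_image, Finset.mem_filter] at hn
        obtain ⟨i, ⟨_, hix⟩, rfl⟩ := hn
        simp only [Finset.mem_range]
        have := i.2.isLt
        rw [← hix]; exact this
      rw [Finset.card_range] at this
      refine le_trans (le_of_eq ?_) this
      rw [Finset.card_image_of_injOn]
      intro i hi j hj hij
      simp only [Finset.mem_coe, Finset.mem_filter] at hi hj
      obtain ⟨⟨a, ha⟩, ka⟩ := i
      obtain ⟨⟨b, hb⟩, kb⟩ := j
      have hab : a = b := hi.2.trans hj.2.symm
      subst hab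
      have hk : ka = kb := Fin.ext hij
      subst hk
      rfl
    have h2 : ((⋃ x ∈ S, G.neighborSet x) \ ↑S : Set V) ⊆ ↑(s.biUnion t) := by
      intro v hv
      obtain ⟨hv1, _⟩ := hv
      simp only [Set.mem_iUnion] at hv1
      obtain ⟨x, hx, hvx⟩ := hv1
      simp only [hS, Finset.mem_image] at hx
      obtain ⟨i, hi, rfl⟩ := hx
      simp only [Finset.coe_biUnion, Set.mem_iUnion]
      exact ⟨i, hi, by simpa [ht] using hvx⟩
    calc s.card ≤ ∑ x ∈ S, f x := h1
      _ ≤ (((⋃ x ∈ S, G.neighborSet x) \ ↑S : Set V)).ncard := hhall S hSX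
      _ ≤ (↑(s.biUnion t) : Set V).ncard :=
          Set.ncard_le_ncard h2 (Finset.finite_toSet _)
      _ = (s.biUnion t).card := Set.ncard_coe_finset _
  obtain ⟨g, hginj, hg⟩ := (Finset.all_card_le_biUnion_card_iff_exists_injective t).mp hall
  have hadj : ∀ i : ι, G.Adj ↑i.1 (g i) := fun i => by
    have := hg i; simpa [ht] using this
  have hgY : ∀ i : ι, g i ∈ Y := by
    intro i
    rcases hbip _ _ (hadj i) with ⟨_, h⟩ | ⟨h, _⟩
    · exact h
    · exact absurd (hdisj.ne_of_mem i.1.2 h rfl) (fun h => h)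
  have hgX : ∀ i : ι, g i ∉ X := fun i hx =>
    hdisj.ne_of_mem hx (hgY i) rfl
  -- build the subgraph
  refine ⟨{
    verts := X ∪ Set.range g
    Adj := fun u v => ∃ i : ι, (u = ↑i.1 ∧ v = g i) ∨ (u = g i ∧ v = ↑i.1)
    adj_sub := by
      rintro u v ⟨i, ⟨rfl, rfl⟩ | ⟨rfl, rfl⟩⟩
      · exact hadj i
      · exact (hadj i).symm
    edge_vert := by
      rintro u v ⟨i, ⟨rfl, rfl⟩ | ⟨rfl, rfl⟩⟩
      · exact Or.inl i.1.2
      · exact Or.inr ⟨i, rfl⟩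
    symm := by
      constructor
      rintro u v ⟨i, ⟨rfl, rfl⟩ | ⟨rfl, rfl⟩⟩
      · exact ⟨i, Or.inr ⟨rfl, rfl⟩⟩
      · exact ⟨i, Or.inl ⟨rfl, rfl⟩⟩ }, ?_, ?_, ?_⟩
  · exact Set.subset_union_left
  · -- degree of x ∈ X
    intro x hx
    have hset : {v | ∃ i : ι, (x = ↑i.1 ∧ v = g i) ∨ (x = g i ∧ v = ↑i.1)}
        = Set.range (fun k : Fin (f x) => g ⟨⟨x, hx⟩, k⟩) := by
      ext v
      constructor
      · rintro ⟨i, ⟨hxi, rfl⟩ | ⟨hxg, _⟩⟩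
        · obtain ⟨⟨a, ha⟩, k⟩ := i
          simp only at hxi
          subst hxi
          exact ⟨k, rfl⟩
        · exact absurd hx (hxg ▸ hgX i)
      · rintro ⟨k, rfl⟩
        exact ⟨⟨⟨x, hx⟩, k⟩, Or.inl ⟨rfl, rfl⟩⟩
    show {v | ∃ i : ι, (x = ↑i.1 ∧ v = g i) ∨ (x = g i ∧ v = ↑i.1)}.ncard = f x
    rw [hset]
    have hinj : Function.Injective (fun k : Fin (f x) => g ⟨⟨x, hx⟩, k⟩) := by
      intro a b hab
      exact eq_of_heq (Sigma.mk.inj_iff.mp (hginj hab)).2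
    rw [Set.ncard_eq_toFinset_card', Set.toFinset_range,
      Finset.card_image_of_injective _ hinj, Finset.card_univ, Fintype.card_fin]
  · -- degree of u ∈ Y ∩ verts
    intro u hu huv
    have huX : u ∉ X := fun h => hdisj.ne_of_mem h hu rfl
    obtain h | ⟨i0, rfl⟩ := huv
    · exact absurd h huX
    have hset : {v | ∃ i : ι, (g i0 = ↑i.1 ∧ v = g i) ∨ (g i0 = g i ∧ v = ↑i.1)}
        = {(↑i0.1 : V)} := by
      ext v
      constructor
      · rintro ⟨i, ⟨hgi, _⟩ | ⟨hgi, rfl⟩⟩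
        · exact absurd (hgi ▸ i.1.2) (hgX i0)
        · have : i0 = i := hginj hgi
          subst this
          rfl
      · rintro rfl
        exact ⟨i0, Or.inr ⟨rfl, rfl⟩⟩
    show {v | ∃ i : ι, (g i0 = ↑i.1 ∧ v = g i) ∨ (g i0 = g i ∧ v = ↑i.1)}.ncard = 1
    rw [hset, Set.ncard_singleton]
end

section
/- Let t ≥ 11 be a real number and let G be a t-tough (2P2 ∪ P1)-free graph on n vertices. Suppose there is an edge uv of G with |N_G(u) ∪ N_G(v)| ≤ 5n/12, and let S = (N_G(u) ∪ N_G(v)) \ {u, v}. Then G − S has exactly two connected components, one of which is the component on the two vertices u and v. -/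
open SimpleGraph

variable {V : Type*}

lemma twoP2P1_embed {V : Type*} (G : SimpleGraph V) {u v x y z : V}
    (huv : G.Adj u v) (hxy : G.Adj x y)
    (hux : ¬G.Adj u x) (huy : ¬G.Adj u y) (huz : ¬G.Adj u z)
    (hvx : ¬G.Adj v x) (hvy : ¬G.Adj v y) (hvz : ¬G.Adj v z)
    (hxz : ¬G.Adj x z) (hyz : ¬G.Adj y z)
    (nux : u ≠ x) (nuy : u ≠ y) (nuz : u ≠ z)
    (nvx : v ≠ x) (nvy : v ≠ y) (nvz : v ≠ z)
    (nxz : x ≠ z) (nyz : y ≠ z) :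
    ∃ f : Fin 5 ↪ V, ∀ a b, G.Adj (f a) (f b) ↔ twoP2P1.Adj a b := by
  have nuv : u ≠ v := huv.ne
  have nxy : x ≠ y := hxy.ne
  have hvu : G.Adj v u := huv.symm
  have hyx : G.Adj y x := hxy.symm
  have hxu : ¬G.Adj x u := fun h => hux h.symm
  have hyu : ¬G.Adj y u := fun h => huy h.symm
  have hzu : ¬G.Adj z u := fun h => huz h.symm
  have hxv : ¬G.Adj x v := fun h => hvx h.symm
  have hyv : ¬G.Adj y v := fun h => hvy h.symm
  have hzv : ¬G.Adj z v := fun h => hvz h.symm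
  have hzx : ¬G.Adj z x := fun h => hxz h.symm
  have hzy : ¬G.Adj z y := fun h => hyz h.symm
  have nxu := nux.symm; have nyu := nuy.symm; have nzu := nuz.symm
  have nxv := nvx.symm; have nyv := nvy.symm; have nzv := nvz.symm
  have nzx := nxz.symm; have nzy := nyz.symm
  have nvu := nuv.symm; have nyx := nxy.symm
  refine ⟨⟨![u, v, x, y, z], ?_⟩, ?_⟩
  · intro a b hab
    fin_cases a <;> fin_cases b <;> simp_all
  · intro a b
    show G.Adj (![u, v, x, y, z] a) (![u, v, x, y, z] b) ↔ _
    fin_cases a <;> fin_cases b <;>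
      simp_all [twoP2P1, SimpleGraph.fromRel_adj, Fin.ext_iff, -Fin.val_eq_zero_iff] <;> decide

lemma walk_closed {V : Type*} {G : SimpleGraph V} {P : Set V}
    (hP : ∀ a b, a ∈ P → G.Adj a b → b ∈ P) :
    ∀ {a b : V}, G.Walk a b → a ∈ P → b ∈ P := by
  intro a b w
  induction w with
  | nil => exact id
  | cons h p ih => exact fun ha => ih (hP _ _ ha h)


/-- Case 1 setup: if `t ≥ 11`, `G` is `t`-tough and `(2P2 ∪ P1)`-free, `uv ∈ E(G)` with
`|N(u) ∪ N(v)| ≤ 5n/12`, and `S = (N(u) ∪ N(v)) \ {u,v}`, then `G - S` has exactly two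
components, one of which is the component on the two vertices `u` and `v`. -/
theorem stmt_11 {V : Type*} [Fintype V] (t : ℝ) (ht : 11 ≤ t) (G : SimpleGraph V)
    (htough : G.Tough t) (hfree : G.IndFree twoP2P1)
    (u v : V) (huv : G.Adj u v)
    (hnbr : ((G.neighborSet u ∪ G.neighborSet v).ncard : ℝ) ≤ 5 * (Fintype.card V) / 12)
    (S : Set V) (hS : S = (G.neighborSet u ∪ G.neighborSet v) \ {u, v}) :
    G.compCount S = 2 ∧
    ∃ hu : u ∈ Sᶜ,
      ((G.induce Sᶜ).connectedComponentMk ⟨u, hu⟩).supp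
        = {w : ↥Sᶜ | (w : V) = u ∨ (w : V) = v} := by
  have hu : u ∈ Sᶜ := by
    rw [hS]; intro h; exact h.2 (Or.inl rfl)
  have hv : v ∈ Sᶜ := by
    rw [hS]; intro h; exact h.2 (Or.inr rfl)
  -- Lemma A : vertices of Sᶜ other than u,v are non-neighbors of u and v
  have hA : ∀ w, w ∈ Sᶜ → w ≠ u → w ≠ v → ¬G.Adj u w ∧ ¬G.Adj v w := by
    intro w hw hwu hwv
    rw [hS] at hw
    constructor
    · intro h; exact hw ⟨Or.inl h, by simp [hwu, hwv]⟩
    · intro h; exact hw ⟨Or.inr h, by simp [hwu, hwv]⟩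
  set G' := G.induce Sᶜ with hG'
  set u' : ↥Sᶜ := ⟨u, hu⟩ with hu'def
  set v' : ↥Sᶜ := ⟨v, hv⟩ with hv'def
  set c0 := G'.connectedComponentMk u' with hc0
  -- the component of u is {u, v}
  have hPclosed : ∀ a b : ↥Sᶜ, ((a:V) = u ∨ (a:V) = v) → G'.Adj a b → ((b:V) = u ∨ (b:V) = v) := by
    intro a b ha hab
    by_contra hb
    push_neg at hb
    have hadj : G.Adj (a:V) (b:V) := by simpa [hG'] using hab
    obtain ⟨h1, h2⟩ := hA (b:V) b.2 hb.1 hb.2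
    rcases ha with ha | ha
    · exact h1 (ha ▸ hadj)
    · exact h2 (ha ▸ hadj)
  have hsupp : c0.supp = {w : ↥Sᶜ | (w : V) = u ∨ (w : V) = v} := by
    ext w
    simp only [ConnectedComponent.mem_supp_iff, Set.mem_setOf_eq]
    constructor
    · intro h
      have hr : G'.Reachable u' w := (ConnectedComponent.eq.mp h).symm
      obtain ⟨p⟩ := hr
      exact walk_closed (P := {w : ↥Sᶜ | (w : V) = u ∨ (w : V) = v}) hPclosed p (Or.inl rfl)
    · rintro (h | h)
      · have hwe : w = u' := Subtype.ext h
        rw [hwe]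
      · have hwe : w = v' := Subtype.ext h
        rw [hwe]
        exact ConnectedComponent.sound (Adj.reachable (by simpa [hG'] using huv.symm))
  -- auxiliary: components other than c0 avoid u,v
  have hcomp_ne : ∀ w : ↥Sᶜ, G'.connectedComponentMk w ≠ c0 → (w:V) ≠ u ∧ (w:V) ≠ v := by
    intro w hw
    constructor
    · intro h
      have hwe : w = u' := Subtype.ext h
      exact hw (congrArg G'.connectedComponentMk hwe)
    · intro h
      apply hw
      have hwe : w = v' := Subtype.ext h
      rw [hwe]
      exact ConnectedComponent.sound (Adj.reachable (by simpa [hG'] using huv.symm))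
  -- counting
  set N := G.neighborSet u ∪ G.neighborSet v with hN
  have huvN : ({u, v} : Set V) ⊆ N := by
    rintro w (rfl | rfl)
    · exact Or.inr huv.symm
    · exact Or.inl huv
  have hNn2 : 2 ≤ N.ncard := by
    calc 2 = ({u, v} : Set V).ncard := (Set.ncard_pair huv.ne).symm
    _ ≤ N.ncard := Set.ncard_le_ncard huvN N.toFinite
  have hk : S.ncard = N.ncard - 2 := by
    rw [hS, Set.ncard_diff huvN, Set.ncard_pair huv.ne]
  have hcompl : S.ncard + Sᶜ.ncard = Fintype.card V := by
    rw [← Nat.card_eq_fintype_card]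
    exact Set.ncard_add_ncard_compl S
  have hn5 : 5 ≤ Fintype.card V := by
    by_contra h
    push_neg at h
    have h4 : (Fintype.card V : ℝ) ≤ 4 := by exact_mod_cast Nat.lt_succ_iff.mp h
    have h2' : (2 : ℝ) ≤ (N.ncard : ℝ) := by exact_mod_cast hNn2
    linarith
  have hNlt : N.ncard + 1 ≤ Fintype.card V := by
    have h5 : (5 : ℝ) ≤ (Fintype.card V : ℝ) := by exact_mod_cast hn5
    have : (N.ncard : ℝ) + 1 ≤ (Fintype.card V : ℝ) := by linarith
    exact_mod_cast this
  have hS3 : S.ncard + 3 ≤ Fintype.card V := by omega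
  have hScompl3 : 3 ≤ Sᶜ.ncard := by omega
  -- card of Sᶜ as a type
  have hcard : Nat.card ↥Sᶜ = Sᶜ.ncard := (Nat.card_coe_set_eq Sᶜ)
  -- an extra vertex
  have hextra : (Sᶜ \ {u, v}).Nonempty := by
    apply Set.nonempty_of_ncard_ne_zero
    have hsub : ({u, v} : Set V) ⊆ Sᶜ := by rintro w (rfl | rfl) <;> assumption
    rw [Set.ncard_diff hsub, Set.ncard_pair huv.ne]
    omega
  obtain ⟨w0, hw0c, hw0uv⟩ := hextra
  have hw0u : w0 ≠ u := fun h => hw0uv (Or.inl h)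
  have hw0v : w0 ≠ v := fun h => hw0uv (Or.inr h)
  have h2 : 2 ≤ G.compCount S := by
    have hne : G'.connectedComponentMk ⟨w0, hw0c⟩ ≠ c0 := by
      intro h
      have : (⟨w0, hw0c⟩ : ↥Sᶜ) ∈ c0.supp := (ConnectedComponent.mem_supp_iff _ _).mpr h
      rw [hsupp] at this
      exact hw0uv (by exact this)
    have : Nontrivial G'.ConnectedComponent := ⟨_, _, hne⟩
    exact Finite.one_lt_card_iff_nontrivial.mpr this
  have h3 : ¬ 3 ≤ G.compCount S := by
    intro hc
    by_cases hE : ∃ x y : ↥Sᶜ, G'.Adj x y ∧ G'.connectedComponentMk x ≠ c0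
    · -- an edge in another component ⇒ 2P2 ∪ P1
      obtain ⟨x, y, hxy, hcx⟩ := hE
      have hxyG : G.Adj (x:V) (y:V) := by simpa [hG'] using hxy
      have hcy : G'.connectedComponentMk y = G'.connectedComponentMk x :=
        ConnectedComponent.sound hxy.symm.reachable
      obtain ⟨hxu, hxv⟩ := hcomp_ne x hcx
      obtain ⟨hyu, hyv⟩ := hcomp_ne y (hcy ▸ hcx)
      -- find a third component
      have : ∃ c2 : G'.ConnectedComponent, c2 ≠ c0 ∧ c2 ≠ G'.connectedComponentMk x := by
        classical
        have inst : Fintype G'.ConnectedComponent := Fintype.ofFinite _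
        have hcard3 : 3 ≤ Fintype.card G'.ConnectedComponent := by
          rw [← Nat.card_eq_fintype_card]; exact hc
        set A := (Finset.univ.erase c0).erase (G'.connectedComponentMk x) with hA'
        have hA1 : (Finset.univ.erase c0).card ≥ Fintype.card G'.ConnectedComponent - 1 := by
          have := Finset.pred_card_le_card_erase (s := (Finset.univ : Finset G'.ConnectedComponent)) (a := c0)
          simpa using this
        have hA2 : A.card ≥ (Finset.univ.erase c0).card - 1 :=
          Finset.pred_card_le_card_erase
        have : A.Nonempty := Finset.card_pos.mp (by omega)
        obtain ⟨c2, hc2⟩ := this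
        rw [hA', Finset.mem_erase, Finset.mem_erase] at hc2
        exact ⟨c2, hc2.2.1, hc2.1⟩
      obtain ⟨c2, hc20, hc2x⟩ := this
      obtain ⟨z, hz0⟩ := c2.exists_rep
      have hz : G'.connectedComponentMk z = c2 := hz0
      obtain ⟨hzu, hzv⟩ := hcomp_ne z (by rw [hz]; exact hc20)
      have hxz : ¬G.Adj (x:V) (z:V) := by
        intro h
        have : G'.Adj x z := by simpa [hG'] using h
        exact hc2x (hz ▸ (ConnectedComponent.sound this.reachable).symm)
      have hyz : ¬G.Adj (y:V) (z:V) := by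
        intro h
        have : G'.Adj y z := by simpa [hG'] using h
        have := (ConnectedComponent.sound this.reachable).symm
        rw [hcy] at this
        exact hc2x (hz ▸ this)
      have nxz : (x:V) ≠ (z:V) := by
        intro h
        exact hc2x (hz ▸ (congrArg G'.connectedComponentMk (Subtype.ext h)).symm)
      have nyz : (y:V) ≠ (z:V) := by
        intro h
        have := (congrArg G'.connectedComponentMk (Subtype.ext h)).symm
        rw [hcy] at this
        exact hc2x (hz ▸ this)
      obtain ⟨hux, hvx⟩ := hA (x:V) x.2 hxu hxv
      obtain ⟨huy, hvy⟩ := hA (y:V) y.2 hyu hyv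
      obtain ⟨huz, hvz⟩ := hA (z:V) z.2 hzu hzv
      exact hfree (twoP2P1_embed G huv hxyG hux huy huz hvx hvy hvz hxz hyz
        (Ne.symm hxu) (Ne.symm hyu) (Ne.symm hzu) (Ne.symm hxv) (Ne.symm hyv) (Ne.symm hzv)
        nxz nyz)
    · -- all edges of G' are inside c0 ⇒ toughness contradiction
      push_neg at hE
      set T : Set ↥Sᶜ := {w : ↥Sᶜ | (w:V) ≠ u ∧ (w:V) ≠ v} with hT
      have hTne : ∀ w ∈ T, G'.connectedComponentMk w ≠ c0 := by
        intro w hw h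
        have : w ∈ c0.supp := (ConnectedComponent.mem_supp_iff _ _).mpr h
        rw [hsupp] at this
        rcases this with h' | h'
        · exact hw.1 h'
        · exact hw.2 h'
      have hinj : Set.InjOn G'.connectedComponentMk T := by
        intro a ha b hb hab
        by_contra hne
        obtain ⟨p⟩ := ConnectedComponent.exact hab
        cases p with
        | nil => exact hne rfl
        | cons h q => exact hTne a ha (hE a _ h)
      have himg : c0 ∉ G'.connectedComponentMk '' T := by
        rintro ⟨w, hw, hwc⟩
        exact hTne w hw hwc
      have hins : (insert c0 (G'.connectedComponentMk '' T)).ncard = T.ncard + 1 := by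
        rw [Set.ncard_insert_of_notMem himg (Set.toFinite _),
          Set.ncard_image_of_injOn hinj]
      have hle : (insert c0 (G'.connectedComponentMk '' T)).ncard
          ≤ Nat.card G'.ConnectedComponent := by
        rw [← Set.ncard_univ]
        exact Set.ncard_le_ncard (Set.subset_univ _) Set.finite_univ
      have hTc : T = ({u', v'} : Set ↥Sᶜ)ᶜ := by
        ext w
        simp [hT, Set.mem_insert_iff, Subtype.ext_iff, hu'def, hv'def, not_or]
      have hTcard : ({u', v'} : Set ↥Sᶜ).ncard + T.ncard = Nat.card ↥Sᶜ := by
        rw [hTc]; exact Set.ncard_add_ncard_compl _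
      have huv' : u' ≠ v' := fun h => huv.ne (Subtype.ext_iff.mp h)
      have hpair : ({u', v'} : Set ↥Sᶜ).ncard = 2 := Set.ncard_pair huv'
      -- combine: compCount ≥ |Sᶜ| - 1
      have hbig : Fintype.card V ≤ G.compCount S + S.ncard + 1 := by
        have : T.ncard + 1 ≤ G.compCount S := by
          rw [← hins]; exact hle
        omega
      have hcut : G.IsCutset S := h2
      have htt := htough S hcut
      have hC2 : (2:ℝ) ≤ (G.compCount S : ℝ) := by exact_mod_cast h2
      have h11 : (11:ℝ) * (G.compCount S : ℝ) ≤ t * (G.compCount S : ℝ) :=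
        mul_le_mul_of_nonneg_right ht (by linarith)
      have hbigR : (Fintype.card V : ℝ) ≤ (G.compCount S : ℝ) + (S.ncard : ℝ) + 1 := by
        exact_mod_cast hbig
      have hkR : (S.ncard : ℝ) = (N.ncard : ℝ) - 2 := by
        have : S.ncard + 2 = N.ncard := by omega
        push_cast [← this]; ring
      have hn5R : (5:ℝ) ≤ (Fintype.card V : ℝ) := by exact_mod_cast hn5
      linarith
  refine ⟨by omega, hu, hsupp⟩
end

section
/- Let t ≥ 11 be a real number and let G be a t-tough (2P2 ∪ P1)-free graph on n vertices. Suppose there is an edge uv of G with |N_G(u) ∪ N_G(v)| ≤ 5n/12, let S = (N_G(u) ∪ N_G(v)) \ {u, v}, and suppose G − S has exactly two components, one being {u, v} and the other being D2. Let S1 = {x ∈ S : x has fewer than 2n/(t+1) neighbors in V(D2)} and let G1 be the subgraph of G induced on S1 ∪ {u, v}. Then G1 is (P2 ∪ P1)-free. -/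
open SimpleGraph

variable {V : Type*}

/-!
Suppose `x, y, z ∈ S₁ ∪ {u, v}` induce `P₂ ∪ P₁`. Since `u` and `v` have no neighbours in
`D₂ = V ∖ (N(u) ∪ N(v))`, each of `x, y, z` has fewer than `2n/(t+1)` neighbours in `D₂`; let `B`
be the set of these neighbours and `A = D₂ ∖ B`. An edge inside `A` would form an induced
`2P₂ ∪ P₁` together with `xy` and `z`, so every vertex of `A` is isolated in `G - (S ∪ B)`.
Toughness then gives `t (|A| + 1) ≤ |S| + |B| < 5n/12 + 6n/(t+1)`, whereas
`|A| ≥ n - 5n/12 - 6n/(t+1)`, which is impossible for `t ≥ 11`.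
-/

lemma Set.compl_diff_diff_eq_compl {α : Type*} {U s : Set α} (hs : s ⊆ U) :
    (U \ s)ᶜ \ s = Uᶜ := by
  ext w
  by_cases hw : w ∈ s
  · simp [hw, hs hw]
  · simp [hw]

namespace SimpleGraph

variable {V : Type*} {G : SimpleGraph V}

lemma Reachable.eq_of_forall_not_adj {a w : V} (h : G.Reachable a w) (ha : ∀ b, ¬ G.Adj a b) :
    a = w := by
  obtain ⟨p⟩ := h
  cases p with
  | nil => rfl
  | cons hab _ => exact absurd hab (ha _)

lemma ncard_add_one_le_compCount [Finite V] {T A : Set V} {c : V} (hc : c ∉ T) (hcA : c ∉ A)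
    (hA : A ⊆ Tᶜ) (hiso : ∀ a ∈ A, ∀ w ∉ T, ¬ G.Adj a w) :
    A.ncard + 1 ≤ G.compCount T := by
  have hisoH : ∀ a : A, ∀ w, ¬ (G.induce Tᶜ).Adj ⟨a, hA a.2⟩ w := fun a w => hiso a a.2 w w.2
  let f : Option A → (G.induce Tᶜ).ConnectedComponent := fun
    | none => (G.induce Tᶜ).connectedComponentMk ⟨c, hc⟩
    | some a => (G.induce Tᶜ).connectedComponentMk ⟨a, hA a.2⟩
  have hf : Function.Injective f := by
    rintro (_ | a) (_ | b) h <;> simp only [f, ConnectedComponent.eq] at h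
    · rfl
    · exact absurd (congrArg Subtype.val (h.symm.eq_of_forall_not_adj (hisoH b))) (by grind)
    · exact absurd (congrArg Subtype.val (h.eq_of_forall_not_adj (hisoH a))) (by grind)
    · exact congrArg some (Subtype.ext (congrArg Subtype.val (h.eq_of_forall_not_adj (hisoH a)) :))
  simpa [compCount, Nat.card_coe_set_eq] using Nat.card_le_card_of_injective f hf

lemma Tough.mul_ncard_add_one_le [Finite V] {t : ℝ} (ht : 0 ≤ t) (hG : G.Tough t) {T A : Set V}
    {c : V} (hc : c ∉ T) (hcA : c ∉ A) (hA : A ⊆ Tᶜ) (hiso : ∀ a ∈ A, ∀ w ∉ T, ¬ G.Adj a w)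
    (hne : A.Nonempty) : t * (A.ncard + 1) ≤ T.ncard := by
  have hcomp := ncard_add_one_le_compCount hc hcA hA hiso
  have hcut : G.IsCutset T := le_trans (by have := hne.ncard_pos; omega) hcomp
  calc t * (A.ncard + 1) ≤ t * G.compCount T := by gcongr; exact_mod_cast hcomp
    _ ≤ T.ncard := hG T hcut

lemma indFree_P2P1_of_forall_adj (h : ∀ x y z, G.Adj x y → G.Adj z x ∨ G.Adj z y) :
    G.IndFree P2P1 := by
  rintro ⟨f, hf⟩
  rcases h (f 0) (f 1) (f 2) ((hf 0 1).2 (by simp [P2P1])) with h | h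
  · simpa [P2P1] using (hf 2 0).1 h
  · simpa [P2P1] using (hf 2 1).1 h

lemma IndFree.not_adj_of_twoP2P1 (hG : G.IndFree twoP2P1) {x y z a b : V} (hxy : G.Adj x y)
    (hzx : ¬ G.Adj z x) (hzy : ¬ G.Adj z y) (ha : ∀ w ∈ ({x, y, z} : Set V), ¬ G.Adj w a)
    (hb : ∀ w ∈ ({x, y, z} : Set V), ¬ G.Adj w b) : ¬ G.Adj a b := by
  intro hab
  simp only [Set.mem_insert_iff, Set.mem_singleton_iff, forall_eq_or_imp, forall_eq] at ha hb
  let f : Fin 5 → V := ![x, y, a, b, z]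
  have hf : ∀ i j, G.Adj (f i) (f j) ↔ twoP2P1.Adj i j := by
    intro i j
    fin_cases i <;> fin_cases j <;> simp_all [f, twoP2P1, G.adj_comm]
  -- `f` is injective because distinct vertices of `2P₂ ∪ P₁` have distinct neighbourhoods.
  have hdistinct : ∀ i j : Fin 5, (∀ k, twoP2P1.Adj i k ↔ twoP2P1.Adj j k) → i = j := by
    simp only [twoP2P1, fromRel_adj]
    decide
  exact hG ⟨⟨f, fun i j hij => hdistinct i j fun k => (hf i k).symm.trans (hij ▸ hf j k)⟩, hf⟩

lemma IndFree.not_adj_of_outside_neighborSets (hfree : G.IndFree twoP2P1) {u v x y z : V}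
    (hxy : G.Adj x y) (hzx : ¬ G.Adj z x) (hzy : ¬ G.Adj z y) {B : Set V}
    (hB : ∀ w ∈ ({x, y, z} : Set V), G.neighborSet w ∩ (G.neighborSet u ∪ G.neighborSet v)ᶜ ⊆ B)
    {a b : V} (ha : a ∈ (G.neighborSet u ∪ G.neighborSet v)ᶜ \ B)
    (hb : b ∉ (G.neighborSet u ∪ G.neighborSet v) \ {u, v} ∪ B) : ¬ G.Adj a b := by
  have houter : ∀ c ∈ (G.neighborSet u ∪ G.neighborSet v)ᶜ \ B,
      ∀ w ∈ ({x, y, z} : Set V), ¬ G.Adj w c :=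
    fun c hc w hw hwc => hc.2 (hB w hw ⟨hwc, hc.1⟩)
  intro hab
  by_cases hbU : b ∈ G.neighborSet u ∪ G.neighborSet v
  · have hb' : b ∈ ({u, v} : Set V) := by
      by_contra h
      exact hb (Or.inl ⟨hbU, h⟩)
    exact ha.1 (by rcases hb' with rfl | rfl; exacts [Or.inl hab.symm, Or.inr hab.symm])
  · exact hfree.not_adj_of_twoP2P1 hxy hzx hzy (houter a ha)
      (houter b ⟨hbU, fun h => hb (Or.inr h)⟩) hab

lemma Tough.false_of_few_neighbors_outside [Fintype V] {t : ℝ} (ht : 11 ≤ t) (hG : G.Tough t)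
    (hfree : G.IndFree twoP2P1) {u v x y z : V} (huv : G.Adj u v)
    (hU : ((G.neighborSet u ∪ G.neighborSet v).ncard : ℝ) ≤ 5 * Fintype.card V / 12)
    (hxy : G.Adj x y) (hzx : ¬ G.Adj z x) (hzy : ¬ G.Adj z y)
    (hsmall : ∀ w ∈ ({x, y, z} : Set V),
      ((G.neighborSet w ∩ (G.neighborSet u ∪ G.neighborSet v)ᶜ).ncard : ℝ)
        < 2 * Fintype.card V / (t + 1)) :
    False := by
  set n := Fintype.card V
  set U := G.neighborSet u ∪ G.neighborSet v
  set B := (G.neighborSet x ∩ Uᶜ) ∪ (G.neighborSet y ∩ Uᶜ) ∪ (G.neighborSet z ∩ Uᶜ)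
  set A := Uᶜ \ B
  have hn : (0 : ℝ) < n := by exact_mod_cast Fintype.card_pos_iff.2 ⟨u⟩
  have huU : u ∈ U := Or.inr huv.symm
  have hBU : B ⊆ Uᶜ := by simp only [B, Set.union_subset_iff, Set.inter_subset_right, and_self]
  have hB : (B.ncard : ℝ) * (t + 1) < 6 * n := by
    have hle : (B.ncard : ℝ) ≤ (G.neighborSet x ∩ Uᶜ).ncard + (G.neighborSet y ∩ Uᶜ).ncard
        + (G.neighborSet z ∩ Uᶜ).ncard := by
      exact_mod_cast (Set.ncard_union_le _ _).trans (add_le_add_left (Set.ncard_union_le _ _) _)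
    rw [← lt_div_iff₀ (by linarith), show 6 * (n : ℝ) / (t + 1) = 3 * (2 * n / (t + 1)) by ring]
    linarith [hsmall x (by simp), hsmall y (by simp), hsmall z (by simp)]
  have hcard : (A.ncard : ℝ) + B.ncard + U.ncard = n := by
    have hAB : A.ncard + B.ncard = Uᶜ.ncard := Set.ncard_sdiff_add_ncard_of_subset hBU
    have hUc := Set.ncard_add_ncard_compl U
    rw [Nat.card_eq_fintype_card] at hUc
    exact_mod_cast (by omega : A.ncard + B.ncard + U.ncard = n)
  have hA : A.Nonempty := by
    have : (0 : ℝ) < A.ncard := by nlinarith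
    exact Set.nonempty_of_ncard_ne_zero (by exact_mod_cast this.ne')
  have hiso : ∀ a ∈ A, ∀ b ∉ U \ {u, v} ∪ B, ¬ G.Adj a b := fun a ha b hb =>
    hfree.not_adj_of_outside_neighborSets hxy hzx hzy (by
      rintro w (rfl | rfl | rfl)
      exacts [fun c hc => Or.inl (Or.inl hc), fun c hc => Or.inl (Or.inr hc),
        fun c hc => Or.inr hc]) ha hb
  have hT := hG.mul_ncard_add_one_le (by linarith) (c := u)
    (fun h => h.elim (fun h => h.2 (by simp)) fun h => hBU h huU) (fun h => h.1 huU)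
    (fun a ha h => h.elim (fun h => ha.1 h.1) ha.2) hiso hA
  have hTU : ((U \ {u, v} ∪ B).ncard : ℝ) ≤ U.ncard + B.ncard := by
    exact_mod_cast (Set.ncard_union_le _ B).trans
      (add_le_add_left (Set.ncard_le_ncard Set.sdiff_subset) _)
  nlinarith [mul_le_mul_of_nonneg_left hU (by linarith : (0 : ℝ) ≤ t + 1),
    mul_nonneg (by linarith : (0 : ℝ) ≤ t - 11) hn.le]

end SimpleGraph

theorem stmt_12_general {V : Type*} [Fintype V] (t : ℝ) (ht : 11 ≤ t) (G : SimpleGraph V)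
    (htough : G.Tough t) (hfree : G.IndFree twoP2P1)
    (u v : V) (huv : G.Adj u v)
    (hnbr : ((G.neighborSet u ∪ G.neighborSet v).ncard : ℝ) ≤ 5 * (Fintype.card V) / 12)
    (S : Set V) (hS : S = (G.neighborSet u ∪ G.neighborSet v) \ {u, v})
    (D2 : Set V) (hD2 : D2 = Sᶜ \ {u, v})
    (S1 : Set V)
    (hS1 : S1 = {x ∈ S |
      ((G.neighborSet x ∩ D2).ncard : ℝ) < 2 * (Fintype.card V) / (t + 1)}) :
    (G.induce (S1 ∪ {u, v})).IndFree P2P1 := by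
  set U := G.neighborSet u ∪ G.neighborSet v
  have huvU : ({u, v} : Set V) ⊆ U := Set.pair_subset (Or.inr huv.symm) (Or.inl huv)
  rw [hS, Set.compl_diff_diff_eq_compl huvU] at hD2
  subst hD2
  have hsmall : ∀ w ∈ S1 ∪ {u, v},
      ((G.neighborSet w ∩ Uᶜ).ncard : ℝ) < 2 * Fintype.card V / (t + 1) := by
    rintro w (hw | hw)
    · exact (hS1 ▸ hw).2
    · have hwU : G.neighborSet w ⊆ U := by
        rcases hw with rfl | rfl
        exacts [Set.subset_union_left, Set.subset_union_right]
      rw [← Set.sdiff_eq, Set.sdiff_eq_empty.2 hwU, Set.ncard_empty, Nat.cast_zero]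
      have : 0 < Fintype.card V := Fintype.card_pos_iff.2 ⟨u⟩
      exact div_pos (by positivity) (by linarith)
  refine SimpleGraph.indFree_P2P1_of_forall_adj fun x y z hxy => ?_
  by_contra! hz
  exact htough.false_of_few_neighbors_outside ht hfree huv hnbr hxy hz.1 hz.2
    (by rintro w (rfl | rfl | rfl) <;> exact hsmall _ (Subtype.prop _))

/-- Case 1, Claim 2: with `S = (N(u) ∪ N(v)) \ {u,v}`, `G - S` having exactly two components
(one being `{u,v}`, the other `D2`), and `S1` the vertices of `S` with fewer than `2n/(t+1)`
neighbors in `D2`, the graph `G1 = G[S1 ∪ {u,v}]` is `(P2 ∪ P1)`-free. -/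
theorem stmt_12 {V : Type*} [Fintype V] (t : ℝ) (ht : 11 ≤ t) (G : SimpleGraph V)
    (htough : G.Tough t) (hfree : G.IndFree twoP2P1)
    (u v : V) (huv : G.Adj u v)
    (hnbr : ((G.neighborSet u ∪ G.neighborSet v).ncard : ℝ) ≤ 5 * (Fintype.card V) / 12)
    (S : Set V) (hS : S = (G.neighborSet u ∪ G.neighborSet v) \ {u, v})
    (hcc : G.compCount S = 2)
    (huvcomp : ∃ hu : u ∈ Sᶜ,
      ((G.induce Sᶜ).connectedComponentMk ⟨u, hu⟩).supp
        = {w : ↥Sᶜ | (w : V) = u ∨ (w : V) = v})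
    (D2 : Set V) (hD2 : D2 = Sᶜ \ {u, v})
    (S1 : Set V)
    (hS1 : S1 = {x ∈ S |
      ((G.neighborSet x ∩ D2).ncard : ℝ) < 2 * (Fintype.card V) / (t + 1)}) :
    (G.induce (S1 ∪ {u, v})).IndFree P2P1 :=
  stmt_12_general t ht G htough hfree u v huv hnbr S hS D2 hD2 S1 hS1
end

section
/- Let t ≥ 11 be a real number and let G be a t-tough (2P2 ∪ P1)-free graph on n vertices. Suppose there is an edge uv of G with |N_G(u) ∪ N_G(v)| ≤ 5n/12, let S = (N_G(u) ∪ N_G(v)) \ {u, v}, and suppose G − S has exactly two components, one being {u, v} and the other being D2. Let S1 = {x ∈ S : x has fewer than 2n/(t+1) neighbors in V(D2)}, S2 = S \ S1, G1 the subgraph of G induced on S1 ∪ {u, v}, and G2 the subgraph of G induced on S2 ∪ V(D2). Let Q be a W-matched path-cover of G1 for some W ⊆ V(G2) whose paths have all internal vertices in V(G1) and which has exactly max{1, s(G1)} components, let L be the set of pairs formed by the two endvertices of each path of Q, and let G2* be the graph obtained from G2 by adding each pair in L as an edge (if not already present). Then κ(G2*) ≥ |L| + α(G2*). -/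
open SimpleGraph

variable {V : Type*}

section Aux
variable {V : Type*} {W : Type*}

private lemma aux_cc_iso {G : SimpleGraph V} {H : SimpleGraph W} (e : G ≃g H) :
    Nat.card G.ConnectedComponent = Nat.card H.ConnectedComponent :=
  Nat.card_eq_of_bijective e.connectedComponentEquiv e.connectedComponentEquiv.bijective

private lemma aux_cc_edgeless {G : SimpleGraph V} (h : ∀ a b : V, ¬ G.Adj a b) :
    Nat.card G.ConnectedComponent = Nat.card V := by
  have hb : Function.Bijective (G.connectedComponentMk) := by
    constructor
    · intro a b hab
      obtain ⟨w⟩ := (SimpleGraph.ConnectedComponent.eq).mp hab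
      cases w with
      | nil => rfl
      | cons h' p => exact absurd h' (h _ _)
    · exact fun c => c.exists_rep
  exact (Nat.card_eq_of_bijective _ hb).symm

private noncomputable def auxInduceIso (G : SimpleGraph V) (A : Set V) (B : Set ↥A) :
    ((G.induce A).induce B) ≃g G.induce (Subtype.val '' B) :=
  ⟨Equiv.Set.image Subtype.val B Subtype.val_injective, Iff.rfl⟩

private lemma aux_compCount_induce (G : SimpleGraph V) (A : Set V) (X : Set ↥A) :
    G.compCount (Subtype.val '' X ∪ Aᶜ) = (G.induce A).compCount X := by
  have hset : (Subtype.val '' X ∪ Aᶜ)ᶜ = Subtype.val '' Xᶜ := by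
    ext x
    simp only [Set.mem_compl_iff, Set.mem_union, Set.mem_image, not_or, not_exists, not_not]
    constructor
    · rintro ⟨h1, h2⟩
      refine ⟨⟨x, h2⟩, ?_, rfl⟩
      intro hX
      exact (h1 ⟨x, h2⟩) ⟨hX, rfl⟩
    · rintro ⟨⟨y, hy⟩, hyX, rfl⟩
      refine ⟨?_, hy⟩
      rintro ⟨z, hz⟩ ⟨hzX, h⟩
      cases h
      exact hyX hzX
  unfold SimpleGraph.compCount
  rw [hset]
  exact (aux_cc_iso (auxInduceIso G A Xᶜ)).symm

private lemma aux_cc_le [Finite V] (G : SimpleGraph V) :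
    Nat.card G.ConnectedComponent ≤ Nat.card V :=
  Nat.card_le_card_of_surjective _ (fun c => c.exists_rep)

private lemma aux_compCount_compl_indep [Fintype V] (G : SimpleGraph V) (I : Set V)
    (hI : G.IsIndepSet' I) : G.compCount Iᶜ = I.ncard := by
  unfold SimpleGraph.compCount
  rw [compl_compl]
  have h : ∀ a b : ↥I, ¬ (G.induce I).Adj a b := by
    rintro ⟨a, ha⟩ ⟨b, hb⟩ hadj
    have hG : G.Adj a b := hadj
    rcases eq_or_ne a b with rfl | hne
    · exact G.irrefl hG
    · exact hI ha hb hne hG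
  rw [aux_cc_edgeless h, Nat.card_coe_set_eq]

private lemma aux_cutset_of_noncomplete [Fintype V] (G : SimpleGraph V)
    (h : ¬ G.IsCompleteGraph) : ∃ U : Set V, G.IsCutset U ∧ U.ncard = Nat.card V - 2 := by
  simp only [SimpleGraph.IsCompleteGraph, not_forall] at h
  obtain ⟨a, b, hab, hnadj⟩ := h
  have hI : G.IsIndepSet' {a, b} := by
    intro x hx y hy hxy
    simp only [Set.mem_insert_iff, Set.mem_singleton_iff] at hx hy
    rcases hx with rfl | rfl <;> rcases hy with rfl | rfl <;>
      first
        | exact absurd rfl hxy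
        | exact hnadj
        | exact fun hadj => hnadj (hadj.symm)
  refine ⟨({a, b} : Set V)ᶜ, ?_, ?_⟩
  · unfold SimpleGraph.IsCutset
    rw [aux_compCount_compl_indep G _ hI, Set.ncard_pair hab]
  · have h2 := Set.ncard_add_ncard_compl ({a,b} : Set V)
    rw [Set.ncard_pair hab] at h2
    omega

private lemma aux_free {V : Type*} (G : SimpleGraph V) (hfree : G.IndFree twoP2P1) (u v x y z : V)
    (huv : G.Adj u v) (hxy : G.Adj x y)
    (h1 : ¬G.Adj u x) (h2 : ¬G.Adj u y) (h3 : ¬G.Adj u z) (h4 : ¬G.Adj v x)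
    (h5 : ¬G.Adj v y) (h6 : ¬G.Adj v z) (h7 : ¬G.Adj x z) (h8 : ¬G.Adj y z)
    (hzu : z ≠ u) (hzv : z ≠ v) (hxu : x ≠ u) (hxv : x ≠ v) (hyu : y ≠ u) (hyv : y ≠ v)
    (hzx : z ≠ x) (hzy : z ≠ y) : False := by
  have huvne := huv.ne
  have hxyne := hxy.ne
  have hvu : G.Adj v u := huv.symm
  have hyx : G.Adj y x := hxy.symm
  have h1' : ¬G.Adj x u := fun h => h1 h.symm
  have h2' : ¬G.Adj y u := fun h => h2 h.symm
  have h3' : ¬G.Adj z u := fun h => h3 h.symm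
  have h4' : ¬G.Adj x v := fun h => h4 h.symm
  have h5' : ¬G.Adj y v := fun h => h5 h.symm
  have h6' : ¬G.Adj z v := fun h => h6 h.symm
  have h7' : ¬G.Adj z x := fun h => h7 h.symm
  have h8' : ¬G.Adj z y := fun h => h8 h.symm
  have hirr : ∀ w : V, ¬G.Adj w w := fun w => G.irrefl
  apply hfree
  refine ⟨⟨![u, v, x, y, z], ?_⟩, ?_⟩
  · intro a b hab
    fin_cases a <;> fin_cases b <;> simp_all
  · intro a b
    change G.Adj (![u, v, x, y, z] a) (![u, v, x, y, z] b) ↔ twoP2P1.Adj a b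
    fin_cases a <;> fin_cases b <;>
      simp_all [twoP2P1, SimpleGraph.fromRel_adj]

end Aux

set_option maxHeartbeats 2000000

/-- Case 1, Claim 4: in the setting of Case 1, with `Q` a `W`-matched path-cover of `G1`
having internal vertices in `V(G1)` and exactly `max {1, s(G1)}` components, `L` the set of
endvertex pairs of the paths of `Q`, and `G2*` obtained from `G2 = G[(S \ S1) ∪ V(D2)]` by
adding the pairs of `L` as edges, we have `κ(G2*) ≥ |L| + α(G2*)`. -/
theorem stmt_14 {V : Type*} [Fintype V] (t : ℝ) (ht : 11 ≤ t) (G : SimpleGraph V)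
    (htough : G.Tough t) (hfree : G.IndFree twoP2P1)
    (u v : V) (huv : G.Adj u v)
    (hnbr : ((G.neighborSet u ∪ G.neighborSet v).ncard : ℝ) ≤ 5 * (Fintype.card V) / 12)
    (S : Set V) (hS : S = (G.neighborSet u ∪ G.neighborSet v) \ {u, v})
    (hcc : G.compCount S = 2)
    (huvcomp : ∃ hu : u ∈ Sᶜ,
      ((G.induce Sᶜ).connectedComponentMk ⟨u, hu⟩).supp
        = {w : ↥Sᶜ | (w : V) = u ∨ (w : V) = v})
    (D2 : Set V) (hD2 : D2 = Sᶜ \ {u, v})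
    (S1 : Set V)
    (hS1 : S1 = {x ∈ S |
      ((G.neighborSet x ∩ D2).ncard : ℝ) < 2 * (Fintype.card V) / (t + 1)})
    (T : Set V) (hT : T = (S \ S1) ∪ D2)
    (W : Set V) (hW : W ⊆ T)
    (Q : G.PathCover (S1 ∪ {u, v}) W)
    (hQint : ∀ i, ∀ x ∈ (Q.walk i).support,
      x ≠ Q.left i → x ≠ Q.right i → x ∈ S1 ∪ {u, v})
    (hQnum : (Q.num : WithTop ℤ) = max 1 (G.induce (S1 ∪ {u, v})).scatter)
    (L : Set (Sym2 V)) (hL : L = {e : Sym2 V | ∃ i, e = s(Q.left i, Q.right i)})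
    (G2star : SimpleGraph ↥T)
    (hG2star : G2star = G.induce T ⊔
      SimpleGraph.fromRel (fun a b : ↥T => s((a : V), (b : V)) ∈ L)) :
    L.ncard + G2star.indepNum' ≤ G2star.kappa := by
  classical
  let AA : Set V := S1 ∪ {u, v}
  set n := Fintype.card V with hn
  have htpos : (0:ℝ) < t + 1 := by linarith
  have hne : u ≠ v := huv.ne
  -- membership basics
  have huvNN : ({u, v} : Set V) ⊆ G.neighborSet u ∪ G.neighborSet v := by
    intro x hx
    rcases hx with rfl | hx
    · exact Or.inr huv.symm
    · rcases hx with rfl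
      exact Or.inl huv
  have hD2adj : ∀ x ∈ D2, ¬ G.Adj u x ∧ ¬ G.Adj v x ∧ x ≠ u ∧ x ≠ v ∧ x ∉ S := by
    intro x hx
    rw [hD2] at hx
    obtain ⟨hxc, hxuv⟩ := hx
    have hxu : x ≠ u := fun h => hxuv (by simp [h])
    have hxv : x ≠ v := fun h => hxuv (by simp [h])
    refine ⟨?_, ?_, hxu, hxv, hxc⟩
    · intro hadj
      exact hxc (by rw [hS]; exact ⟨Or.inl hadj, hxuv⟩)
    · intro hadj
      exact hxc (by rw [hS]; exact ⟨Or.inr hadj, hxuv⟩)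
  -- counting basics
  have hcardNN : (G.neighborSet u ∪ G.neighborSet v).ncard = S.ncard + 2 := by
    rw [hS]
    rw [← Set.ncard_diff_add_ncard_of_subset huvNN (Set.toFinite _), Set.ncard_pair hne]
  have hcardS : (S.ncard : ℝ) ≤ 5 * n / 12 - 2 := by
    rw [hcardNN] at hnbr
    push_cast at hnbr
    linarith
  have hScomp : Sᶜ = {u, v} ∪ D2 := by
    rw [hD2]
    ext x
    by_cases hx : x ∈ ({u, v} : Set V) <;> simp [hx]
    · rcases hx with rfl | hx
      · intro hxS
        rw [hS] at hxS
        exact hxS.2 (Or.inl rfl)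
      · rcases hx with rfl
        intro hxS
        rw [hS] at hxS
        exact hxS.2 (Or.inr rfl)
  have hD2uv : Disjoint ({u, v} : Set V) D2 := by
    rw [hD2, Set.disjoint_right]
    rintro x ⟨hxc, hxuv⟩ hx
    exact hxuv hx
  have hnsplit : n = S.ncard + 2 + D2.ncard := by
    have h1 := Set.ncard_add_ncard_compl S (Set.toFinite _) (Set.toFinite _)
    rw [hScomp, Set.ncard_union_eq hD2uv (Set.toFinite _) (Set.toFinite _),
      Set.ncard_pair hne, Nat.card_eq_fintype_card] at h1
    omega
  have hStough : 2 * t ≤ (S.ncard : ℝ) := by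
    have h := htough S (by rw [SimpleGraph.IsCutset, hcc])
    rw [hcc] at h
    push_cast at h
    linarith
  have hD2ne : D2.Nonempty := by
    have h2 : (1:ℕ) < Nat.card (G.induce Sᶜ).ConnectedComponent := by
      have : G.compCount S = 2 := hcc
      rw [SimpleGraph.compCount] at this
      omega
    haveI : Finite (G.induce Sᶜ).ConnectedComponent :=
      Finite.of_surjective _ (fun c => c.exists_rep)
    rw [Finite.one_lt_card_iff_nontrivial] at h2
    obtain ⟨hu, hsupp⟩ := huvcomp
    obtain ⟨c, hc⟩ := exists_ne ((G.induce Sᶜ).connectedComponentMk ⟨u, hu⟩)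
    obtain ⟨w, rfl⟩ := c.exists_rep
    have hwsupp : w ∉ ((G.induce Sᶜ).connectedComponentMk ⟨u, hu⟩).supp := by
      intro hmem
      exact hc hmem
    rw [hsupp] at hwsupp
    simp only [Set.mem_setOf_eq, not_or] at hwsupp
    refine ⟨(w : V), ?_⟩
    rw [hD2]
    exact ⟨w.2, by simp [hwsupp.1, hwsupp.2]⟩
  have hD2card : (7:ℝ) * n / 12 ≤ (D2.ncard : ℝ) := by
    have : (n:ℝ) = S.ncard + 2 + D2.ncard := by rw [hnsplit]; push_cast; ring
    linarith
  have hnt : 2 * t + 3 ≤ (n : ℝ) := by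
    have h1 : (1:ℝ) ≤ D2.ncard := by
      have := hD2ne.ncard_pos (Set.toFinite _)
      exact_mod_cast this
    have : (n:ℝ) = S.ncard + 2 + D2.ncard := by rw [hnsplit]; push_cast; ring
    linarith
  have hr1 : (1:ℝ) ≤ n / (t + 1) := by
    rw [le_div_iff₀ htpos]
    linarith
  have hr12 : (n:ℝ) / (t+1) ≤ n / 12 := by
    exact div_le_div_of_nonneg_left (by positivity) (by norm_num) (by linarith)
  have hindep : ∀ J : Set V, G.IsIndepSet' J → 2 ≤ J.ncard →
      (J.ncard : ℝ) * (t + 1) ≤ n := by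
    intro J hJ h2
    have hcut : G.IsCutset Jᶜ := by
      rw [SimpleGraph.IsCutset, aux_compCount_compl_indep G J hJ]; exact h2
    have h := htough Jᶜ hcut
    rw [aux_compCount_compl_indep G J hJ] at h
    have hc : J.ncard + Jᶜ.ncard = n := by
      have h3 := Set.ncard_add_ncard_compl J (Set.toFinite _) (Set.toFinite _)
      rw [Nat.card_eq_fintype_card] at h3; exact h3
    have h4 : (Jᶜ.ncard : ℝ) = n - J.ncard := by
      have : ((J.ncard + Jᶜ.ncard : ℕ) : ℝ) = (n:ℝ) := by rw [hc]
      push_cast at this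
      linarith
    rw [h4] at h
    nlinarith
  have hαr : (G2star.indepNum' : ℝ) ≤ n / (t + 1) := by
    have hmem : G2star.indepNum' ∈
        {k : ℕ | ∃ s : Set ↥T, G2star.IsIndepSet' s ∧ s.ncard = k} := by
      apply Nat.sSup_mem
      · exact ⟨0, ∅, by simp [SimpleGraph.IsIndepSet'], by simp⟩
      · refine ⟨Fintype.card ↥T, ?_⟩
        rintro k ⟨s, _, rfl⟩
        calc s.ncard ≤ (Set.univ : Set ↥T).ncard :=
              Set.ncard_le_ncard (Set.subset_univ _) (Set.toFinite _)
          _ = _ := by rw [Set.ncard_univ, Nat.card_eq_fintype_card]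
    rw [SimpleGraph.indepNum'] at *
    obtain ⟨I, hI, hIcard⟩ := hmem
    rcases le_or_gt (sSup {k : ℕ | ∃ s : Set ↥T, G2star.IsIndepSet' s ∧ s.ncard = k}) 1
      with h1 | h1
    · have : ((sSup {k : ℕ | ∃ s : Set ↥T, G2star.IsIndepSet' s ∧ s.ncard = k} : ℕ):ℝ) ≤ 1 := by
        exact_mod_cast h1
      linarith
    · have hJ : G.IsIndepSet' (Subtype.val '' I) := by
        rintro x ⟨a, ha, rfl⟩ y ⟨b, hb, rfl⟩ hxy hadj
        have hab : a ≠ b := fun h => hxy (by rw [h])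
        apply hI ha hb hab
        rw [hG2star]
        exact (SimpleGraph.sup_adj _ _ _ _).mpr (Or.inl hadj)
      have hcard : (Subtype.val '' I).ncard =
          sSup {k : ℕ | ∃ s : Set ↥T, G2star.IsIndepSet' s ∧ s.ncard = k} := by
        rw [Set.ncard_image_of_injective _ Subtype.val_injective, hIcard]
      have hbig := hindep _ hJ (by omega)
      rw [hcard] at hbig
      rw [le_div_iff₀ htpos]
      linarith
  have hAA : AA = S1 ∪ {u, v} := rfl
  have hQr : (Q.num : ℝ) ≤ n / (t + 1) := by
    by_cases hcomp : (G.induce AA).IsCompleteGraph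
    · exfalso
      rw [SimpleGraph.scatter, if_pos hcomp] at hQnum
      have htop : (Q.num : WithTop ℤ) = ⊤ := by
        rw [hQnum]
        exact sup_eq_right.mpr le_top
      exact (WithTop.natCast_ne_top Q.num) htop
    · rw [SimpleGraph.scatter, if_neg hcomp] at hQnum
      set Z := {z : ℤ | ∃ X : Set ↥AA, (G.induce AA).IsCutset X ∧
        z = ((G.induce AA).compCount X : ℤ) - (X.ncard : ℤ)} with hZ
      have hZbound : ∀ z ∈ Z, (z : ℝ) * (t + 1) ≤ n := by
        rintro z ⟨X, hXcut, rfl⟩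
        set c := (G.induce AA).compCount X with hc
        have hcomp' : G.compCount (Subtype.val '' X ∪ AAᶜ) = c := aux_compCount_induce G AA X
        have htight := htough _ (by
          rw [SimpleGraph.IsCutset, hcomp']; exact hXcut)
        rw [hcomp'] at htight
        have hdisj : Disjoint (Subtype.val '' X) AAᶜ := by
          rw [Set.disjoint_right]
          rintro x hx ⟨⟨y, hy⟩, _, rfl⟩
          exact hx hy
        have hYcard : (Subtype.val '' X ∪ AAᶜ).ncard + AA.ncard = X.ncard + n := by
          rw [Set.ncard_union_eq hdisj (Set.toFinite _) (Set.toFinite _),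
            Set.ncard_image_of_injective _ Subtype.val_injective]
          have h3 := Set.ncard_add_ncard_compl AA (Set.toFinite _) (Set.toFinite _)
          rw [Nat.card_eq_fintype_card] at h3
          omega
        have hcle : c + X.ncard ≤ AA.ncard := by
          have h4 : c ≤ Nat.card ↥(Xᶜ : Set ↥AA) := aux_cc_le _
          rw [Nat.card_coe_set_eq] at h4
          have h5 := Set.ncard_add_ncard_compl X (Set.toFinite _) (Set.toFinite _)
          rw [Nat.card_coe_set_eq] at h5
          omega
        have hY : ((Subtype.val '' X ∪ AAᶜ).ncard : ℝ) = X.ncard + n - AA.ncard := by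
          have : (((Subtype.val '' X ∪ AAᶜ).ncard + AA.ncard : ℕ) : ℝ)
              = ((X.ncard + n : ℕ) : ℝ) := by rw [hYcard]
          push_cast at this
          linarith
        rw [hY] at htight
        have hcler : (c : ℝ) + X.ncard ≤ AA.ncard := by exact_mod_cast hcle
        push_cast
        nlinarith [Nat.cast_nonneg (α := ℝ) X.ncard]
      have hZne : Z.Nonempty := by
        obtain ⟨U0, hU0, -⟩ := aux_cutset_of_noncomplete (G.induce AA) hcomp
        exact ⟨_, U0, hU0, rfl⟩
      have hZbdd : BddAbove Z := by
        refine ⟨(n : ℤ), fun z hz => ?_⟩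
        have h := hZbound z hz
        have hz2 : (z : ℝ) ≤ n := by nlinarith
        exact_mod_cast hz2
      have hzmem := Int.csSup_mem hZne hZbdd
      have hzr : ((sSup Z : ℤ) : ℝ) ≤ n / (t + 1) := by
        have := hZbound _ hzmem
        rw [le_div_iff₀ htpos]
        linarith
      have hQZ : (Q.num : ℤ) = max 1 (sSup Z) := by
        have h6 : (Q.num : WithTop ℤ) = ((max 1 (sSup Z) : ℤ) : WithTop ℤ) := by
          rw [hQnum]
          push_cast
          rfl
        exact_mod_cast h6
      have : (Q.num : ℝ) = max 1 ((sSup Z : ℤ) : ℝ) := by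
        rw [show ((Q.num : ℕ) : ℝ) = (((Q.num : ℕ) : ℤ) : ℝ) by push_cast; rfl, hQZ]
        push_cast
        rfl
      rw [this]
      exact max_le hr1 hzr
  have hLQ : L.ncard ≤ Q.num := by
    have hLr : L = (fun i : Fin Q.num => s(Q.left i, Q.right i)) '' Set.univ := by
      rw [hL, Set.image_univ]
      ext e
      simp only [Set.mem_setOf_eq, Set.mem_range, eq_comm]
    rw [hLr]
    calc ((fun i : Fin Q.num => s(Q.left i, Q.right i)) '' Set.univ).ncard
        ≤ (Set.univ : Set (Fin Q.num)).ncard := Set.ncard_image_le (Set.toFinite _)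
      _ = Q.num := by rw [Set.ncard_univ, Nat.card_eq_fintype_card, Fintype.card_fin]
  have hLcard : (L.ncard : ℝ) ≤ n / (t + 1) :=
    le_trans (by exact_mod_cast hLQ) hQr
  have hD2T : D2 ⊆ T := by rw [hT]; exact Set.subset_union_right
  have hD2Tcard : (D2.ncard : ℝ) ≤ T.ncard := by
    exact_mod_cast Set.ncard_le_ncard hD2T (Set.toFinite _)
  by_cases hcompT : G2star.IsCompleteGraph
  · rw [SimpleGraph.kappa, if_pos hcompT, Nat.card_coe_set_eq]
    have hreal : (L.ncard : ℝ) + G2star.indepNum' + 1 ≤ T.ncard := by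
      have h12 : (12:ℝ)/5 ≤ n := by linarith
      nlinarith [hαr, hLcard, hr12, hD2card]
    have hNat : L.ncard + G2star.indepNum' + 1 ≤ T.ncard := by exact_mod_cast hreal
    omega
  · rw [SimpleGraph.kappa, if_neg hcompT]
    have hKne : {k : ℕ | ∃ U : Set ↥T, G2star.IsCutset U ∧ U.ncard = k}.Nonempty := by
      obtain ⟨U0, hU0, -⟩ := aux_cutset_of_noncomplete G2star hcompT
      exact ⟨_, U0, hU0, rfl⟩
    obtain ⟨U, hUcut, hUcard⟩ := Nat.sInf_mem hKne
    rw [← hUcard]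
    -- component analysis
    have hHcc : 1 < Nat.card (G2star.induce (Uᶜ : Set ↥T)).ConnectedComponent := hUcut
    haveI : Finite (G2star.induce (Uᶜ : Set ↥T)).ConnectedComponent :=
      Finite.of_surjective _ (fun c => c.exists_rep)
    have hHnt : Nontrivial (G2star.induce (Uᶜ : Set ↥T)).ConnectedComponent :=
      Finite.one_lt_card_iff_nontrivial.mp hHcc
    have hGH : ∀ p q : ↥(Uᶜ : Set ↥T), G.Adj ((p : ↥T) : V) ((q : ↥T) : V) →
        (G2star.induce (Uᶜ : Set ↥T)).Adj p q := by
      intro p q h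
      show G2star.Adj (p : ↥T) (q : ↥T)
      rw [hG2star]
      exact (SimpleGraph.sup_adj _ _ _ _).mpr (Or.inl h)
    have hsame : ∀ p q : ↥(Uᶜ : Set ↥T), G.Adj ((p : ↥T) : V) ((q : ↥T) : V) →
        (G2star.induce (Uᶜ : Set ↥T)).connectedComponentMk p
          = (G2star.induce (Uᶜ : Set ↥T)).connectedComponentMk q := fun p q h =>
      SimpleGraph.ConnectedComponent.sound (hGH p q h).reachable
    have heq2 : 2 * (n:ℝ) / (t+1) = 2 * ((n:ℝ) / (t+1)) := by ring
    by_cases hcaseA : ∃ p q : ↥(Uᶜ : Set ↥T), ((p:↥T):V) ∈ D2 ∧ ((q:↥T):V) ∈ D2 ∧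
        G.Adj ((p:↥T):V) ((q:↥T):V)
    · obtain ⟨p, q, hpD, hqD, hpq⟩ := hcaseA
      have hall : ∀ z : ↥(Uᶜ : Set ↥T), ((z:↥T):V) ∈ D2 →
          (G2star.induce (Uᶜ : Set ↥T)).connectedComponentMk z
            = (G2star.induce (Uᶜ : Set ↥T)).connectedComponentMk p := by
        intro z hz
        by_contra hzz
        have hzp : ¬ G.Adj ((z:↥T):V) ((p:↥T):V) := fun h => hzz (hsame _ _ h)
        have hzq : ¬ G.Adj ((z:↥T):V) ((q:↥T):V) := fun h =>
          hzz ((hsame _ _ h).trans (hsame q p hpq.symm))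
        have hzpne : ((z:↥T):V) ≠ ((p:↥T):V) := by
          intro h
          exact hzz (by rw [show z = p from Subtype.ext (Subtype.ext h)])
        have hzqne : ((z:↥T):V) ≠ ((q:↥T):V) := by
          intro h
          rw [show z = q from Subtype.ext (Subtype.ext h)] at hzz
          exact hzz (hsame q p hpq.symm)
        obtain ⟨hpu, hpv, hpnu, hpnv, -⟩ := hD2adj _ hpD
        obtain ⟨hqu, hqv, hqnu, hqnv, -⟩ := hD2adj _ hqD
        obtain ⟨hzu, hzv, hznu, hznv, -⟩ := hD2adj _ hz
        exact aux_free G hfree u v ((p:↥T):V) ((q:↥T):V) ((z:↥T):V) huv hpq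
          hpu hqu hzu hpv hqv hzv (fun h => hzp h.symm) (fun h => hzq h.symm)
          hznu hznv hpnu hpnv hqnu hqnv hzpne hzqne
      obtain ⟨cW, hcW⟩ := exists_ne
        ((G2star.induce (Uᶜ : Set ↥T)).connectedComponentMk p)
      obtain ⟨w, rfl⟩ := cW.exists_rep
      have hwD : ((w:↥T):V) ∉ D2 := fun h => hcW (hall w h)
      have hwS : ((w:↥T):V) ∈ S \ S1 := by
        have hwT : ((w:↥T):V) ∈ S \ S1 ∪ D2 := by
          rw [← hT]
          exact (w:↥T).2
        rcases hwT with h | h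
        · exact h
        · exact absurd h hwD
      have hwdeg : 2 * (n:ℝ) / (t+1) ≤ ((G.neighborSet ((w:↥T):V) ∩ D2).ncard : ℝ) := by
        have h1 : ((w:↥T):V) ∉ S1 := hwS.2
        rw [hS1] at h1
        simp only [Set.mem_setOf_eq, not_and, not_lt] at h1
        exact h1 hwS.1
      have hsub : G.neighborSet ((w:↥T):V) ∩ D2 ⊆ Subtype.val '' U := by
        rintro d ⟨hdN, hdD⟩
        have hdT : d ∈ T := hD2T hdD
        by_contra hdU
        have hdUc : (⟨d, hdT⟩ : ↥T) ∈ (Uᶜ : Set ↥T) := by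
          intro hmem
          exact hdU ⟨⟨d, hdT⟩, hmem, rfl⟩
        have hadj : G.Adj ((w:↥T):V) d := hdN
        exact hcW ((hsame w ⟨⟨d, hdT⟩, hdUc⟩ hadj).trans
          (hall ⟨⟨d, hdT⟩, hdUc⟩ hdD))
      have hUge : 2 * (n:ℝ) / (t+1) ≤ (U.ncard : ℝ) := by
        have h2 : (G.neighborSet ((w:↥T):V) ∩ D2).ncard ≤ (Subtype.val '' U).ncard :=
          Set.ncard_le_ncard hsub (Set.toFinite _)
        rw [Set.ncard_image_of_injective _ Subtype.val_injective] at h2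
        have h2' : ((G.neighborSet ((w:↥T):V) ∩ D2).ncard : ℝ) ≤ U.ncard := by
          exact_mod_cast h2
        linarith
      have hfin : (L.ncard : ℝ) + G2star.indepNum' ≤ (U.ncard : ℝ) := by
        linarith [hαr, hLcard]
      exact_mod_cast hfin
    · have hcaseB : ∀ p q : ↥(Uᶜ : Set ↥T), ((p:↥T):V) ∈ D2 → ((q:↥T):V) ∈ D2 →
          ¬ G.Adj ((p:↥T):V) ((q:↥T):V) := by
        intro p q hp hq hadj
        exact hcaseA ⟨p, q, hp, hq, hadj⟩
      set J := {x : V | x ∈ D2 ∧ ∃ z : ↥(Uᶜ : Set ↥T), ((z:↥T):V) = x} with hJdef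
      have hJD2 : J ⊆ D2 := fun x hx => hx.1
      have huJ : u ∉ J := fun h => (hD2adj u h.1).2.2.1 rfl
      have hIind : G.IsIndepSet' (insert u J) := by
        intro x hx y hy hxy
        rcases hx with rfl | hxJ
        · rcases hy with rfl | hyJ
          · exact absurd rfl hxy
          · exact (hD2adj y hyJ.1).1
        · rcases hy with rfl | hyJ
          · intro hadj
            exact (hD2adj x hxJ.1).1 hadj.symm
          · obtain ⟨hxD, zx, hzx⟩ := hxJ
            obtain ⟨hyD, zy, hzy⟩ := hyJ
            intro hadj
            exact hcaseB zx zy (by rwa [hzx]) (by rwa [hzy]) (by rwa [hzx, hzy])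
      have hJcard : (J.ncard : ℝ) ≤ n/(t+1) - 1 := by
        rcases J.eq_empty_or_nonempty with hJe | hJne
        · rw [hJe]
          simp only [Set.ncard_empty, Nat.cast_zero]
          linarith
        · have h2 : 2 ≤ (insert u J).ncard := by
            obtain ⟨x, hx⟩ := hJne
            have hxu : x ≠ u := fun h => huJ (h ▸ hx)
            have hsub2 : ({u, x} : Set V) ⊆ insert u J := by
              intro y hy
              rcases hy with rfl | hy
              · exact Set.mem_insert _ _
              · rcases hy with rfl
                exact Set.mem_insert_of_mem _ hx
            calc 2 = ({u, x} : Set V).ncard := (Set.ncard_pair (Ne.symm hxu)).symm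
              _ ≤ _ := Set.ncard_le_ncard hsub2 (Set.toFinite _)
          have hbig := hindep _ hIind h2
          rw [Set.ncard_insert_of_notMem huJ (Set.toFinite _)] at hbig
          push_cast at hbig
          rw [div_sub' (ne_of_gt htpos), le_div_iff₀ htpos]
          nlinarith
      have hsub : D2 \ J ⊆ Subtype.val '' U := by
        rintro x ⟨hxD, hxJ⟩
        have hxT : x ∈ T := hD2T hxD
        by_contra hxU
        apply hxJ
        refine ⟨hxD, ⟨⟨⟨x, hxT⟩, ?_⟩, rfl⟩⟩
        intro hmem
        exact hxU ⟨⟨x, hxT⟩, hmem, rfl⟩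
      have hUge : (D2.ncard : ℝ) - J.ncard ≤ U.ncard := by
        have h2 : (D2 \ J).ncard ≤ (Subtype.val '' U).ncard :=
          Set.ncard_le_ncard hsub (Set.toFinite _)
        rw [Set.ncard_image_of_injective _ Subtype.val_injective] at h2
        have h3 : (D2 \ J).ncard + J.ncard = D2.ncard :=
          Set.ncard_diff_add_ncard_of_subset hJD2 (Set.toFinite _)
        have h2' : ((D2 \ J).ncard : ℝ) ≤ U.ncard := by exact_mod_cast h2
        have h3' : ((D2 \ J).ncard : ℝ) + J.ncard = D2.ncard := by exact_mod_cast h3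
        linarith
      have hfin : (L.ncard : ℝ) + G2star.indepNum' ≤ (U.ncard : ℝ) := by
        linarith [hαr, hLcard, hr12, hD2card, hJcard]
      exact_mod_cast hfin
end

section
/- Let G be a (2P2 ∪ P1)-free graph and let S be a cutset of G. If some connected component of G − S contains at least two vertices, then every other connected component of G − S (viewed as an induced subgraph of G) is (P2 ∪ P1)-free. -/
/-!
Pick an edge `ab` inside the component `C`. Distinct components of `G - S` are disjoint and
have no edges between them, so an induced `P2 ∪ P1` inside another component `D`, together
with the edge `ab`, is an induced `2P2 ∪ P1` in `G`.
-/

open SimpleGraph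

variable {V : Type*}

theorem twoP2P1_adj_succ_succ (i j : Fin 3) :
    twoP2P1.Adj i.succ.succ j.succ.succ ↔ P2P1.Adj i j := by
  simp only [twoP2P1, P2P1, fromRel_adj]; revert i j; decide

theorem twoP2P1_adj_zero_one : twoP2P1.Adj 0 1 := by
  simp only [twoP2P1, fromRel_adj]; decide

theorem twoP2P1_not_adj_zero_succ_succ (i : Fin 3) : ¬ twoP2P1.Adj 0 i.succ.succ := by
  simp only [twoP2P1, fromRel_adj]; revert i; decide

theorem twoP2P1_not_adj_one_succ_succ (i : Fin 3) : ¬ twoP2P1.Adj 1 i.succ.succ := by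
  simp only [twoP2P1, fromRel_adj]; revert i; decide

theorem not_indFree_twoP2P1_of_adj_of_induced_P2P1 {G : SimpleGraph V} {a b : V}
    (hab : G.Adj a b) (f : Fin 3 ↪ V) (hf : ∀ i j, G.Adj (f i) (f j) ↔ P2P1.Adj i j)
    (ha : ∀ i, a ≠ f i ∧ ¬ G.Adj a (f i)) (hb : ∀ i, b ≠ f i ∧ ¬ G.Adj b (f i)) :
    ¬ G.IndFree twoP2P1 := by
  have hinj : Function.Injective (Fin.cons a (Fin.cons b f : Fin 4 → V) : Fin 5 → V) := by
    refine Fin.cons_injective_iff.2 ⟨?_, Fin.cons_injective_iff.2 ⟨?_, f.injective⟩⟩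
    · simpa [Fin.range_cons, hab.ne] using fun i => (ha i).1.symm
    · simpa using fun i => (hb i).1.symm
  refine fun h => h ⟨⟨_, hinj⟩, fun i j => ?_⟩
  refine Fin.cases ?_ (Fin.cases ?_ fun i => ?_) i <;>
    refine Fin.cases ?_ (Fin.cases ?_ fun j => ?_) j <;>
    simp only [Function.Embedding.coeFn_mk, Fin.cons_zero, Fin.cons_succ]
  · simp only [SimpleGraph.irrefl]
  · exact iff_of_true hab twoP2P1_adj_zero_one
  · exact iff_of_false (ha j).2 (twoP2P1_not_adj_zero_succ_succ j)
  · exact iff_of_true hab.symm twoP2P1_adj_zero_one.symm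
  · simp only [SimpleGraph.irrefl]
  · exact iff_of_false (hb j).2 (twoP2P1_not_adj_one_succ_succ j)
  · rw [G.adj_comm, twoP2P1.adj_comm]
    exact iff_of_false (ha i).2 (twoP2P1_not_adj_zero_succ_succ i)
  · rw [G.adj_comm, twoP2P1.adj_comm]
    exact iff_of_false (hb i).2 (twoP2P1_not_adj_one_succ_succ i)
  · exact (hf i j).trans (twoP2P1_adj_succ_succ i j).symm

namespace SimpleGraph.ConnectedComponent

variable {G : SimpleGraph V} {C D : G.ConnectedComponent} {u v : V}

theorem ne_of_mem_supp_of_ne (hCD : C ≠ D) (hu : u ∈ C.supp) (hv : v ∈ D.supp) : u ≠ v := by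
  rintro rfl
  exact hCD (eq_of_common_vertex hu hv)

theorem not_adj_of_mem_supp_of_ne (hCD : C ≠ D) (hu : u ∈ C.supp) (hv : v ∈ D.supp) :
    ¬ G.Adj u v :=
  fun h => hCD (eq_of_common_vertex (C.mem_supp_of_adj_mem_supp hu h) hv)

theorem exists_adj_of_one_lt_ncard_supp (hC : 1 < C.supp.ncard) :
    ∃ u ∈ C.supp, ∃ w ∈ C.supp, G.Adj u w := by
  obtain ⟨u, hu, v, hv, huv⟩ := (Set.one_lt_ncard_iff_nontrivial_and_finite.1 hC).1
  obtain ⟨w, huw⟩ := mem_support_of_reachable huv (C.reachable_of_mem_supp hu hv)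
  exact ⟨u, hu, w, C.mem_supp_of_adj_mem_supp hu huw, huw⟩

end SimpleGraph.ConnectedComponent

theorem stmt_16_general {V : Type*} (G : SimpleGraph V) (hfree : G.IndFree twoP2P1)
    (S : Set V)
    (C : (G.induce Sᶜ).ConnectedComponent) (hC : 2 ≤ C.supp.ncard) :
    ∀ D : (G.induce Sᶜ).ConnectedComponent, D ≠ C →
      (G.induce (Subtype.val '' D.supp)).IndFree P2P1 := by
  rintro D hDC ⟨f, hf⟩
  obtain ⟨a, ha, b, hb, hab⟩ := C.exists_adj_of_one_lt_ncard_supp hC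
  choose d hd hdf using fun i => (f i).2
  have hsep : ∀ u ∈ C.supp, ∀ i, (u : V) ≠ f i ∧ ¬ G.Adj u (f i) := by
    intro u hu i
    rw [← hdf i]
    exact ⟨Subtype.val_injective.ne (ConnectedComponent.ne_of_mem_supp_of_ne hDC.symm hu (hd i)),
      ConnectedComponent.not_adj_of_mem_supp_of_ne (G := G.induce Sᶜ) hDC.symm hu (hd i)⟩
  exact not_indFree_twoP2P1_of_adj_of_induced_P2P1 (G := G) hab
    (f.trans (Function.Embedding.subtype _)) hf (hsep a ha) (hsep b hb) hfree

/-- If `G` is `(2P2 ∪ P1)`-free, `S` is a cutset of `G`, and some component of `G - S` has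
at least two vertices, then every other component of `G - S`, viewed as an induced subgraph
of `G`, is `(P2 ∪ P1)`-free. -/
theorem stmt_16 {V : Type*} [Fintype V] (G : SimpleGraph V) (hfree : G.IndFree twoP2P1)
    (S : Set V) (hS : G.IsCutset S)
    (C : (G.induce Sᶜ).ConnectedComponent) (hC : 2 ≤ C.supp.ncard) :
    ∀ D : (G.induce Sᶜ).ConnectedComponent, D ≠ C →
      (G.induce (Subtype.val '' D.supp)).IndFree P2P1 :=
  stmt_16_general G hfree S C hC
end
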